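/- arXiv:2003.09929 — 5 statements merged into one kernel-verified Lean document; each statement's English description precedes it below -/
import Mathlib

section
/- Let G be a vertex-minimal graph with no (F_3,F_4)-partition, let v ∈ V(G), and let (A_3,A_4) be an (F_3,F_4)-partition of G − v. For i ∈ {3,4}, if u is the unique neighbor of v lying in A_i, then u has exactly i neighbors in A_i (u is A_i-saturated) and u also has at least one neighbor in A_{7−i}; in particular deg_G(u) ≥ i + 2. -/
open SimpleGraph Finset

lemma two_nbrs {V : Type*} {G : SimpleGraph V} {v : V} (c : G.Walk v v) (hc : c.IsCycle) :
    ∃ w x, G.Adj v w ∧ G.Adj v x ∧ w ≠ x := by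
  cases c with
  | nil => exact absurd rfl hc.ne_nil
  | @cons _ b _ h p =>
    cases hpr : p.reverse with
    | nil => exact absurd h (G.loopless.irrefl v)
    | @cons _ x _ h' q =>
      refine ⟨b, x, h, h', ?_⟩
      rintro rfl
      have hedges := hc.edges_nodup
      rw [SimpleGraph.Walk.edges_cons] at hedges
      have hxmem : s(v, b) ∈ p.edges := by
        have : s(v, b) ∈ p.reverse.edges := by rw [hpr]; simp
        rwa [SimpleGraph.Walk.edges_reverse, List.mem_reverse] at this
      exact (List.nodup_cons.mp hedges).1 hxmem

lemma lift_walk {V : Type*} {G : SimpleGraph V} {s t : Set V} (h : s ⊆ t) :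
    ∀ {a b : t} (p : (G.induce t).Walk a b) (hp : ∀ x ∈ p.support, ↑x ∈ s),
    ∃ q : (G.induce s).Walk ⟨a, hp a p.start_mem_support⟩ ⟨b, hp b p.end_mem_support⟩,
      q.map (G.induceHomOfLE h).toHom = p
  | a, _, SimpleGraph.Walk.nil, hp => ⟨SimpleGraph.Walk.nil, rfl⟩
  | a, b, SimpleGraph.Walk.cons had p, hp => by
    have hp' : ∀ x ∈ p.support, ↑x ∈ s := fun x hx =>
      hp x (by rw [SimpleGraph.Walk.support_cons]; exact List.mem_cons_of_mem _ hx)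
    obtain ⟨q, hq⟩ := lift_walk h p hp'
    have had' : (G.induce s).Adj ⟨a, hp a (SimpleGraph.Walk.start_mem_support _)⟩
        ⟨_, hp' _ (SimpleGraph.Walk.start_mem_support _)⟩ := had
    exact ⟨SimpleGraph.Walk.cons had' q, by rw [SimpleGraph.Walk.map_cons, hq]; rfl⟩

lemma isAcyclic_induce_mono {V : Type*} {G : SimpleGraph V} {s t : Set V} (h : s ⊆ t)
    (ht : (G.induce t).IsAcyclic) : (G.induce s).IsAcyclic := by
  intro a c hc
  exact ht _ ((SimpleGraph.Walk.map_isCycle_iff_of_injective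
    (f := (G.induceHomOfLE h).toHom) (Set.inclusion_injective h)).mpr hc)

lemma isAcyclic_insert {V : Type*} {G : SimpleGraph V} {s : Set V} {v : V}
    (hs : (G.induce s).IsAcyclic)
    (hv : ∀ w x, w ∈ s → x ∈ s → G.Adj v w → G.Adj v x → w = x) :
    (G.induce (insert v s)).IsAcyclic := by
  classical
  intro a c hc
  by_cases hmem : (⟨v, Set.mem_insert v s⟩ : (insert v s : Set V)) ∈ c.support
  · obtain ⟨w, x, hw, hx, hne⟩ := two_nbrs _ (hc.rotate hmem)
    have hws : (w : V) ∈ s := by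
      rcases w.2 with h' | h'
      · exact absurd (Subtype.ext h'.symm) hw.ne
      · exact h'
    have hxs : (x : V) ∈ s := by
      rcases x.2 with h' | h'
      · exact absurd (Subtype.ext h'.symm) hx.ne
      · exact h'
    exact hne (Subtype.ext (hv _ _ hws hxs hw hx))
  · have hsub : s ⊆ insert v s := Set.subset_insert v s
    have hsupp : ∀ x ∈ c.support, (x : V) ∈ s := by
      intro x hx
      rcases x.2 with h' | h'
      · have hxeq : x = (⟨v, Set.mem_insert v s⟩ : (insert v s : Set V)) := Subtype.ext h'
        exact absurd (hxeq ▸ hx) hmem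
      · exact h'
    obtain ⟨q, hq⟩ := lift_walk hsub c hsupp
    have : q.IsCycle := by
      rw [← SimpleGraph.Walk.map_isCycle_iff_of_injective
        (f := (G.induceHomOfLE hsub).toHom) (Set.inclusion_injective hsub), hq]
      exact hc
    exact hs _ this

/-- `A` (playing the role of `A₃`) together with `S \ A` (playing the role of `A₄`)
is an `(𝓕₃,𝓕₄)`-partition of the subgraph of `G` induced on the vertex set `S`:
`A` induces a forest of maximum degree at most `3` and `S \ A` induces a forest of
maximum degree at most `4`. -/
def FFPartOn {V : Type*} [Fintype V] [DecidableEq V] (G : SimpleGraph V)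
    [DecidableRel G.Adj] (S A : Finset V) : Prop :=
  A ⊆ S ∧
  (∀ v ∈ A, (G.neighborFinset v ∩ A).card ≤ 3) ∧
  (∀ v ∈ S \ A, (G.neighborFinset v ∩ (S \ A)).card ≤ 4) ∧
  (G.induce (↑A : Set V)).IsAcyclic ∧
  (G.induce (↑(S \ A) : Set V)).IsAcyclic

/-- `G` is a vertex-minimal graph admitting no `(𝓕₃,𝓕₄)`-partition: `G` itself has no
`(𝓕₃,𝓕₄)`-partition, but for every vertex `v` the graph `G - v` has one. -/
def MinimalNoFF {V : Type*} [Fintype V] [DecidableEq V] (G : SimpleGraph V)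
    [DecidableRel G.Adj] : Prop :=
  (¬ ∃ A : Finset V, FFPartOn G Finset.univ A) ∧
  (∀ v : V, ∃ A : Finset V, FFPartOn G (Finset.univ \ {v}) A)

/-- If `G` is vertex-minimal with no `(𝓕₃,𝓕₄)`-partition, `(A₃, A₄)` is an
`(𝓕₃,𝓕₄)`-partition of `G − v`, and `u` is the unique neighbor of `v` in `Aᵢ`
(`i ∈ {3,4}`), then `u` is `Aᵢ`-saturated (exactly `i` neighbors in `Aᵢ`), has a
neighbor in `A₇₋ᵢ`, and hence `deg_G(u) ≥ i + 2`. -/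
theorem unique_neighbor_saturated {V : Type*} [Fintype V] [DecidableEq V]
    (G : SimpleGraph V) [DecidableRel G.Adj] (hmin : MinimalNoFF G)
    (v u : V) (A : Finset V) (hA : FFPartOn G (Finset.univ \ {v}) A) :
    ((G.neighborFinset v ∩ A = {u}) →
      (G.neighborFinset u ∩ A).card = 3 ∧
      (∃ w ∈ G.neighborFinset u, w ∈ (Finset.univ \ {v}) \ A) ∧
      5 ≤ G.degree u) ∧
    ((G.neighborFinset v ∩ ((Finset.univ \ {v}) \ A) = {u}) →
      (G.neighborFinset u ∩ ((Finset.univ \ {v}) \ A)).card = 4 ∧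
      (∃ w ∈ G.neighborFinset u, w ∈ A) ∧
      6 ≤ G.degree u) := by
  obtain ⟨hmin1, -⟩ := hmin
  obtain ⟨hAsub, h3, h4, hac3, hac4⟩ := hA
  have hvA : v ∉ A := fun hv => by simpa using hAsub hv
  constructor
  · -- Part 1 : unique neighbour in A₃
    intro h1
    have h1' : ∀ x, G.Adj v x ∧ x ∈ A ↔ x = u := by
      intro x
      rw [← Finset.mem_singleton, ← h1, Finset.mem_inter, SimpleGraph.mem_neighborFinset]
    have huA : u ∈ A := ((h1' u).mpr rfl).2
    have hadj : G.Adj v u := ((h1' u).mpr rfl).1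
    have huv : u ≠ v := fun h => G.loopless.irrefl v (h ▸ hadj)
    -- u is saturated in A
    have Csat : (G.neighborFinset u ∩ A).card = 3 := by
      have hle := h3 u huA
      by_contra hne3
      have hlt : (G.neighborFinset u ∩ A).card ≤ 2 := by omega
      apply hmin1
      refine ⟨insert v A, Finset.subset_univ _, ?_, ?_, ?_, ?_⟩
      · intro w hw
        rcases Finset.mem_insert.mp hw with rfl | hwA
        · have hEq : G.neighborFinset w ∩ insert w A = {u} := by
            ext x
            simp only [Finset.mem_inter, SimpleGraph.mem_neighborFinset, Finset.mem_insert,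
              Finset.mem_singleton]
            constructor
            · rintro ⟨ha, (rfl | hxA)⟩
              · exact absurd rfl ha.ne
              · exact (h1' x).mp ⟨ha, hxA⟩
            · rintro rfl
              exact ⟨hadj, Or.inr huA⟩
          rw [hEq]; simp
        · by_cases hwu : w = u
          · subst hwu
            have hEq : G.neighborFinset w ∩ insert v A = insert v (G.neighborFinset w ∩ A) := by
              ext x
              simp only [Finset.mem_inter, SimpleGraph.mem_neighborFinset, Finset.mem_insert]
              constructor
              · rintro ⟨ha, (rfl | hxA)⟩
                · exact Or.inl rfl
                · exact Or.inr ⟨ha, hxA⟩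
              · rintro (rfl | ⟨ha, hxA⟩)
                · exact ⟨hadj.symm, Or.inl rfl⟩
                · exact ⟨ha, Or.inr hxA⟩
            rw [hEq, Finset.card_insert_of_notMem (fun hx => hvA (Finset.mem_inter.mp hx).2)]
            omega
          · have hnadj : ¬ G.Adj v w := fun ha => hwu ((h1' w).mp ⟨ha, hwA⟩)
            have hEq : G.neighborFinset w ∩ insert v A = G.neighborFinset w ∩ A := by
              ext x
              simp only [Finset.mem_inter, SimpleGraph.mem_neighborFinset, Finset.mem_insert]
              constructor
              · rintro ⟨ha, (rfl | hxA)⟩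
                · exact absurd ha.symm hnadj
                · exact ⟨ha, hxA⟩
              · rintro ⟨ha, hxA⟩
                exact ⟨ha, Or.inr hxA⟩
            rw [hEq]; exact h3 w hwA
      · have hEq : Finset.univ \ insert v A = (Finset.univ \ {v}) \ A := by
          ext x; simp only [Finset.mem_sdiff, Finset.mem_univ, Finset.mem_insert,
            Finset.mem_singleton, true_and]; tauto
        rw [hEq]; exact h4
      · rw [Finset.coe_insert]
        refine isAcyclic_insert hac3 ?_
        intro w x hw hx haw hax
        rw [(h1' w).mp ⟨haw, Finset.mem_coe.mp hw⟩, (h1' x).mp ⟨hax, Finset.mem_coe.mp hx⟩]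
      · have hEq : Finset.univ \ insert v A = (Finset.univ \ {v}) \ A := by
          ext x; simp only [Finset.mem_sdiff, Finset.mem_univ, Finset.mem_insert,
            Finset.mem_singleton, true_and]; tauto
        rw [hEq]; exact hac4
    have Cnbr : ∃ w ∈ G.neighborFinset u, w ∈ (Finset.univ \ {v}) \ A := by
      by_contra hno
      push_neg at hno
      have hno' : ∀ w, G.Adj u w → w ≠ v → w ∈ A := by
        intro w hw hwv
        by_contra hwA
        exact hno w (by rwa [SimpleGraph.mem_neighborFinset]) (by simp [hwv, hwA])
      apply hmin1
      have hEq2 : Finset.univ \ insert v (A.erase u) = insert u ((Finset.univ \ {v}) \ A) := by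
        ext x
        by_cases hxv : x = v <;> by_cases hxu : x = u <;>
          simp_all [Finset.mem_sdiff, Finset.mem_insert, Finset.mem_erase]
      refine ⟨insert v (A.erase u), Finset.subset_univ _, ?_, ?_, ?_, ?_⟩
      · intro w hw
        rcases Finset.mem_insert.mp hw with rfl | hwA
        · have hEq : G.neighborFinset w ∩ insert w (A.erase u) = ∅ := by
            rw [Finset.eq_empty_iff_forall_notMem]
            intro x hx
            simp only [Finset.mem_inter, SimpleGraph.mem_neighborFinset, Finset.mem_insert,
              Finset.mem_erase] at hx
            obtain ⟨ha, (rfl | ⟨hxu, hxA⟩)⟩ := hx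
            · exact ha.ne rfl
            · exact hxu ((h1' x).mp ⟨ha, hxA⟩)
          rw [hEq]; simp
        · obtain ⟨hwu, hwA⟩ := Finset.mem_erase.mp hwA
          have hnadj : ¬ G.Adj v w := fun ha => hwu ((h1' w).mp ⟨ha, hwA⟩)
          have hsub : G.neighborFinset w ∩ insert v (A.erase u) ⊆ G.neighborFinset w ∩ A := by
            intro x hx
            simp only [Finset.mem_inter, SimpleGraph.mem_neighborFinset, Finset.mem_insert,
              Finset.mem_erase] at hx ⊢
            obtain ⟨ha, (rfl | ⟨-, hxA⟩)⟩ := hx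
            · exact absurd ha.symm hnadj
            · exact ⟨ha, hxA⟩
          exact le_trans (Finset.card_le_card hsub) (h3 w hwA)
      · intro w hw
        rw [hEq2] at hw ⊢
        rcases Finset.mem_insert.mp hw with rfl | hwB
        · have hEq : G.neighborFinset w ∩ insert w ((Finset.univ \ {v}) \ A) = ∅ := by
            rw [Finset.eq_empty_iff_forall_notMem]
            intro x hx
            simp only [Finset.mem_inter, SimpleGraph.mem_neighborFinset, Finset.mem_insert,
              Finset.mem_sdiff, Finset.mem_univ, Finset.mem_singleton, true_and] at hx
            obtain ⟨ha, (rfl | ⟨hxv, hxA⟩)⟩ := hx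
            · exact ha.ne rfl
            · exact hxA (hno' x ha hxv)
          rw [hEq]; simp
        · have hw' := hwB
          simp only [Finset.mem_sdiff, Finset.mem_univ, Finset.mem_singleton, true_and] at hw'
          obtain ⟨hwv, hwA⟩ := hw'
          have hsub : G.neighborFinset w ∩ insert u ((Finset.univ \ {v}) \ A)
              ⊆ G.neighborFinset w ∩ ((Finset.univ \ {v}) \ A) := by
            intro x hx
            simp only [Finset.mem_inter, Finset.mem_insert] at hx ⊢
            obtain ⟨ha, (rfl | hxB)⟩ := hx
            · rw [SimpleGraph.mem_neighborFinset] at ha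
              exact absurd (hno' w ha.symm hwv) hwA
            · exact ⟨ha, hxB⟩
          exact le_trans (Finset.card_le_card hsub) (h4 w hwB)
      · rw [Finset.coe_insert, Finset.coe_erase]
        refine isAcyclic_insert (isAcyclic_induce_mono Set.diff_subset hac3) ?_
        intro w x hw hx haw hax
        exact absurd (Set.mem_singleton_iff.mpr ((h1' w).mp ⟨haw, Finset.mem_coe.mp hw.1⟩)) hw.2
      · rw [hEq2, Finset.coe_insert]
        refine isAcyclic_insert hac4 ?_
        intro w x hw hx haw hax
        exfalso
        have hw' : w ∈ (Finset.univ \ {v}) \ A := Finset.mem_coe.mp hw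
        simp only [Finset.mem_sdiff, Finset.mem_univ, Finset.mem_singleton, true_and] at hw'
        exact hw'.2 (hno' w haw hw'.1)
    refine ⟨Csat, Cnbr, ?_⟩
    obtain ⟨w, hw1, hw2⟩ := Cnbr
    simp only [Finset.mem_sdiff, Finset.mem_univ, Finset.mem_singleton, true_and] at hw2
    obtain ⟨hwv, hwA⟩ := hw2
    have hsub : insert v (insert w (G.neighborFinset u ∩ A)) ⊆ G.neighborFinset u := by
      intro x hx
      rcases Finset.mem_insert.mp hx with rfl | hx
      · rw [SimpleGraph.mem_neighborFinset]; exact hadj.symm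
      rcases Finset.mem_insert.mp hx with rfl | hx
      · exact hw1
      · exact (Finset.mem_inter.mp hx).1
    have hwmem : w ∉ G.neighborFinset u ∩ A := fun hx => hwA (Finset.mem_inter.mp hx).2
    have hvmem : v ∉ insert w (G.neighborFinset u ∩ A) := by
      intro hx
      rcases Finset.mem_insert.mp hx with rfl | hx
      · exact hwv rfl
      · exact hvA (Finset.mem_inter.mp hx).2
    have h5 : (insert v (insert w (G.neighborFinset u ∩ A))).card = 5 := by
      rw [Finset.card_insert_of_notMem hvmem, Finset.card_insert_of_notMem hwmem, Csat]
    calc (5:ℕ) = _ := h5.symm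
      _ ≤ (G.neighborFinset u).card := Finset.card_le_card hsub
      _ = G.degree u := rfl
  · -- Part 2 : unique neighbour in A₄
    intro h2
    have h2' : ∀ x, G.Adj v x ∧ x ∉ A ↔ x = u := by
      intro x
      constructor
      · rintro ⟨ha, hx⟩
        have hmem : x ∈ G.neighborFinset v ∩ ((Finset.univ \ {v}) \ A) := by
          simp [SimpleGraph.mem_neighborFinset, ha, ha.ne', hx]
        rwa [h2, Finset.mem_singleton] at hmem
      · rintro rfl
        have hmem : x ∈ G.neighborFinset v ∩ ((Finset.univ \ {v}) \ A) := by
          rw [h2]; exact Finset.mem_singleton_self x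
        simp only [Finset.mem_inter, SimpleGraph.mem_neighborFinset, Finset.mem_sdiff,
          Finset.mem_univ, Finset.mem_singleton, true_and] at hmem
        exact ⟨hmem.1, hmem.2.2⟩
    have hadj : G.Adj v u := ((h2' u).mpr rfl).1
    have huA : u ∉ A := ((h2' u).mpr rfl).2
    have huv : u ≠ v := fun h => G.loopless.irrefl v (h ▸ hadj)
    have huB : u ∈ (Finset.univ \ {v}) \ A := by simp [huv, huA]
    have hEq3 : Finset.univ \ A = insert v ((Finset.univ \ {v}) \ A) := by
      ext x
      by_cases hxv : x = v <;> simp_all [Finset.mem_sdiff, Finset.mem_insert]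
    have Csat : (G.neighborFinset u ∩ ((Finset.univ \ {v}) \ A)).card = 4 := by
      have hle := h4 u huB
      by_contra hne4
      have hlt : (G.neighborFinset u ∩ ((Finset.univ \ {v}) \ A)).card ≤ 3 := by omega
      apply hmin1
      refine ⟨A, Finset.subset_univ _, h3, ?_, hac3, ?_⟩
      · intro w hw
        rw [hEq3] at hw ⊢
        rcases Finset.mem_insert.mp hw with rfl | hwB
        · have hEq : G.neighborFinset w ∩ insert w ((Finset.univ \ {w}) \ A) = {u} := by
            ext x
            simp only [Finset.mem_inter, SimpleGraph.mem_neighborFinset, Finset.mem_insert,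
              Finset.mem_sdiff, Finset.mem_univ, Finset.mem_singleton, true_and]
            constructor
            · rintro ⟨ha, (rfl | ⟨hxv, hxA⟩)⟩
              · exact absurd rfl ha.ne
              · exact (h2' x).mp ⟨ha, hxA⟩
            · rintro rfl
              exact ⟨hadj, Or.inr ⟨huv, huA⟩⟩
          rw [hEq]; simp
        · by_cases hwu : w = u
          · subst hwu
            have hvB : v ∉ G.neighborFinset w ∩ ((Finset.univ \ {v}) \ A) := by simp
            have hEq : G.neighborFinset w ∩ insert v ((Finset.univ \ {v}) \ A)
                = insert v (G.neighborFinset w ∩ ((Finset.univ \ {v}) \ A)) := by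
              ext x
              simp only [Finset.mem_inter, Finset.mem_insert]
              constructor
              · rintro ⟨ha, (rfl | hxB)⟩
                · exact Or.inl rfl
                · exact Or.inr ⟨ha, hxB⟩
              · rintro (rfl | ⟨ha, hxB⟩)
                · exact ⟨by rw [SimpleGraph.mem_neighborFinset]; exact hadj.symm, Or.inl rfl⟩
                · exact ⟨ha, Or.inr hxB⟩
            rw [hEq, Finset.card_insert_of_notMem hvB]
            omega
          · have hw' := hwB
            simp only [Finset.mem_sdiff, Finset.mem_univ, Finset.mem_singleton, true_and] at hw'
            have hnadj : ¬ G.Adj v w := fun ha => hwu ((h2' w).mp ⟨ha, hw'.2⟩)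
            have hEq : G.neighborFinset w ∩ insert v ((Finset.univ \ {v}) \ A)
                = G.neighborFinset w ∩ ((Finset.univ \ {v}) \ A) := by
              ext x
              simp only [Finset.mem_inter, Finset.mem_insert, SimpleGraph.mem_neighborFinset]
              constructor
              · rintro ⟨ha, (rfl | hxB)⟩
                · exact absurd ha.symm hnadj
                · exact ⟨ha, hxB⟩
              · rintro ⟨ha, hxB⟩; exact ⟨ha, Or.inr hxB⟩
            rw [hEq]; exact h4 w hwB
      · rw [hEq3, Finset.coe_insert]
        refine isAcyclic_insert hac4 ?_
        intro w x hw hx haw hax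
        have hw' : w ∈ (Finset.univ \ {v}) \ A := Finset.mem_coe.mp hw
        have hx' : x ∈ (Finset.univ \ {v}) \ A := Finset.mem_coe.mp hx
        simp only [Finset.mem_sdiff, Finset.mem_univ, Finset.mem_singleton, true_and] at hw' hx'
        rw [(h2' w).mp ⟨haw, hw'.2⟩, (h2' x).mp ⟨hax, hx'.2⟩]
    have Cnbr : ∃ w ∈ G.neighborFinset u, w ∈ A := by
      by_contra hno
      push_neg at hno
      have hno' : ∀ w, G.Adj u w → w ∉ A := fun w hw =>
        hno w (by rwa [SimpleGraph.mem_neighborFinset])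
      apply hmin1
      have hEq4 : Finset.univ \ insert u A
          = insert v (((Finset.univ \ {v}) \ A).erase u) := by
        ext x
        by_cases hxv : x = v <;> by_cases hxu : x = u <;>
          simp_all [Finset.mem_sdiff, Finset.mem_insert, Finset.mem_erase]
      refine ⟨insert u A, Finset.subset_univ _, ?_, ?_, ?_, ?_⟩
      · intro w hw
        rcases Finset.mem_insert.mp hw with rfl | hwA
        · have hEq : G.neighborFinset w ∩ insert w A = ∅ := by
            rw [Finset.eq_empty_iff_forall_notMem]
            intro x hx
            simp only [Finset.mem_inter, SimpleGraph.mem_neighborFinset, Finset.mem_insert] at hx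
            obtain ⟨ha, (rfl | hxA)⟩ := hx
            · exact ha.ne rfl
            · exact hno' x ha hxA
          rw [hEq]; simp
        · have hnadj : u ∉ G.neighborFinset w := by
            rw [SimpleGraph.mem_neighborFinset]
            exact fun ha => hno' w ha.symm hwA
          have hsub : G.neighborFinset w ∩ insert u A ⊆ G.neighborFinset w ∩ A := by
            intro x hx
            simp only [Finset.mem_inter, Finset.mem_insert] at hx ⊢
            obtain ⟨ha, (rfl | hxA)⟩ := hx
            · exact absurd ha hnadj
            · exact ⟨ha, hxA⟩
          exact le_trans (Finset.card_le_card hsub) (h3 w hwA)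
      · intro w hw
        rw [hEq4] at hw ⊢
        rcases Finset.mem_insert.mp hw with rfl | hwB
        · have hEq : G.neighborFinset w ∩ insert w (((Finset.univ \ {w}) \ A).erase u) = ∅ := by
            rw [Finset.eq_empty_iff_forall_notMem]
            intro x hx
            simp only [Finset.mem_inter, SimpleGraph.mem_neighborFinset, Finset.mem_insert,
              Finset.mem_erase, Finset.mem_sdiff, Finset.mem_univ, Finset.mem_singleton,
              true_and] at hx
            obtain ⟨ha, (rfl | ⟨hxu, -, hxA⟩)⟩ := hx
            · exact ha.ne rfl
            · exact hxu ((h2' x).mp ⟨ha, hxA⟩)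
          rw [hEq]; simp
        · obtain ⟨hwu, hwB'⟩ := Finset.mem_erase.mp hwB
          have hw' := hwB'
          simp only [Finset.mem_sdiff, Finset.mem_univ, Finset.mem_singleton, true_and] at hw'
          have hnadj : ¬ G.Adj v w := fun ha => hwu ((h2' w).mp ⟨ha, hw'.2⟩)
          have hsub : G.neighborFinset w ∩ insert v (((Finset.univ \ {v}) \ A).erase u)
              ⊆ G.neighborFinset w ∩ ((Finset.univ \ {v}) \ A) := by
            intro x hx
            simp only [Finset.mem_inter, Finset.mem_insert, Finset.mem_erase] at hx ⊢
            obtain ⟨ha, (rfl | ⟨-, hxB⟩)⟩ := hx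
            · rw [SimpleGraph.mem_neighborFinset] at ha
              exact absurd ha.symm hnadj
            · exact ⟨ha, hxB⟩
          exact le_trans (Finset.card_le_card hsub) (h4 w hwB')
      · rw [Finset.coe_insert]
        refine isAcyclic_insert hac3 ?_
        intro w x hw hx haw hax
        exact absurd (Finset.mem_coe.mp hw) (hno' w haw)
      · rw [hEq4, Finset.coe_insert, Finset.coe_erase]
        refine isAcyclic_insert (isAcyclic_induce_mono Set.diff_subset hac4) ?_
        intro w x hw hx haw hax
        exfalso
        have hw1 : w ∈ (Finset.univ \ {v}) \ A := Finset.mem_coe.mp hw.1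
        simp only [Finset.mem_sdiff, Finset.mem_univ, Finset.mem_singleton, true_and] at hw1
        exact hw.2 (Set.mem_singleton_iff.mpr ((h2' w).mp ⟨haw, hw1.2⟩))
    refine ⟨Csat, Cnbr, ?_⟩
    obtain ⟨w, hw1, hw2⟩ := Cnbr
    have hwv : w ≠ v := fun h => hvA (h ▸ hw2)
    have hsub : insert v (insert w (G.neighborFinset u ∩ ((Finset.univ \ {v}) \ A)))
        ⊆ G.neighborFinset u := by
      intro x hx
      rcases Finset.mem_insert.mp hx with rfl | hx
      · rw [SimpleGraph.mem_neighborFinset]; exact hadj.symm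
      rcases Finset.mem_insert.mp hx with rfl | hx
      · exact hw1
      · exact (Finset.mem_inter.mp hx).1
    have hwmem : w ∉ G.neighborFinset u ∩ ((Finset.univ \ {v}) \ A) := by
      intro hx
      have h' := (Finset.mem_inter.mp hx).2
      simp only [Finset.mem_sdiff, Finset.mem_univ, Finset.mem_singleton, true_and] at h'
      exact h'.2 hw2
    have hvmem : v ∉ insert w (G.neighborFinset u ∩ ((Finset.univ \ {v}) \ A)) := by
      intro hx
      rcases Finset.mem_insert.mp hx with rfl | hx
      · exact hwv rfl
      · have h' := (Finset.mem_inter.mp hx).2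
        simp at h'
    have h6 : (insert v (insert w (G.neighborFinset u
        ∩ ((Finset.univ \ {v}) \ A)))).card = 6 := by
      rw [Finset.card_insert_of_notMem hvmem, Finset.card_insert_of_notMem hwmem, Csat]
    calc (6:ℕ) = _ := h6.symm
      _ ≤ (G.neighborFinset u).card := Finset.card_le_card hsub
      _ = G.degree u := rfl
end

section
/- Let G be a vertex-minimal graph with no (F_3,F_4)-partition, v ∈ V(G), and (A_3,A_4) an (F_3,F_4)-partition of G − v. For i ∈ {3,4}, if u is the unique neighbor of v in A_i and deg_G(u) = i + 2, then u has a neighbor w ∈ A_{7−i} which is A_{7−i}-saturated (w has exactly 7−i neighbors in A_{7−i}). -/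
open SimpleGraph Finset


namespace SimpleGraph

variable {V : Type*} {G : SimpleGraph V}

/-- Lift a walk whose support lies in `t` to the induced subgraph on `t`. -/
def Walk.induceLift {t : Set V} :
    ∀ {a b : V} (p : G.Walk a b) (hp : ∀ x ∈ p.support, x ∈ t),
      (G.induce t).Walk ⟨a, hp a p.start_mem_support⟩ ⟨b, hp b p.end_mem_support⟩
  | _, _, .nil, _ => .nil
  | _, _, .cons h p, hp =>
      .cons (by exact h) (p.induceLift fun x hx => hp x (by simp [hx]))

lemma Walk.map_induceLift {t : Set V} :
    ∀ {a b : V} (p : G.Walk a b) (hp : ∀ x ∈ p.support, x ∈ t),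
      (p.induceLift hp).map (Embedding.induce t).toHom = p
  | _, _, .nil, _ => rfl
  | _, _, .cons h p, hp => by
      simp only [induceLift, Walk.map_cons, cons.injEq, heq_eq_eq, true_and]
      exact congrArg (Walk.cons h) (p.map_induceLift _)

lemma induce_isAcyclic_iff {t : Set V} :
    (G.induce t).IsAcyclic ↔ ∀ (a : V) (c : G.Walk a a), c.IsCycle → ∃ x ∈ c.support, x ∉ t := by
  constructor
  · intro h a c hc
    by_contra hx
    push_neg at hx
    have hinj : Function.Injective (Embedding.induce (G := G) t).toHom := Subtype.val_injective
    have h2 : ((c.induceLift hx).map (Embedding.induce t).toHom).IsCycle := by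
      rw [Walk.map_induceLift]; exact hc
    exact h _ ((Walk.map_isCycle_iff_of_injective hinj).mp h2)
  · intro h a c hc
    have hinj : Function.Injective (Embedding.induce (G := G) t).toHom := Subtype.val_injective
    have hc' := hc.map (f := (Embedding.induce t).toHom) hinj
    obtain ⟨x, hx, hxt⟩ := h _ _ hc'
    rw [Walk.support_map, List.mem_map] at hx
    obtain ⟨y, _, rfl⟩ := hx
    exact hxt y.2

lemma Walk.IsCycle.exists_two_neighbors {x : V} {d : G.Walk x x} (hd : d.IsCycle) :
    ∃ b b', b ≠ b' ∧ G.Adj x b ∧ G.Adj x b' ∧ b ∈ d.support ∧ b' ∈ d.support := by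
  have hlen := hd.three_le_length
  cases d with
  | nil => exact absurd rfl hd.ne_nil
  | @cons _ b _ hadj q =>
    rw [Walk.cons_isCycle_iff] at hd
    have hqlen : 2 ≤ q.length := by simp at hlen; omega
    cases q with
    | nil => simp at hqlen
    | @cons _ b2 _ h2 p =>
      obtain ⟨y, r, h', heq⟩ := Walk.exists_cons_eq_concat h2 p
      have hbney : b ≠ y := by
        rintro rfl
        have hpath : (Walk.cons h2 p).IsPath := hd.1
        rw [heq] at hpath
        have hr : r.IsPath := by
          rw [Walk.isPath_def] at hpath ⊢
          rw [Walk.support_concat] at hpath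
          simp only [List.concat_eq_append, List.nodup_append] at hpath
          exact hpath.1
        have hrnil : r = Walk.nil := by
          have := SimpleGraph.Path.loop_eq (⟨r, hr⟩ : G.Path b b)
          simpa [SimpleGraph.Path.nil] using congrArg Subtype.val this
        rw [hrnil] at heq
        have : (Walk.cons h2 p).length = 1 := by rw [heq]; simp [Walk.length_concat]
        simp only [Walk.length_cons] at this hqlen; omega
      refine ⟨b, y, hbney, hadj, h'.symm, ?_, ?_⟩
      · simp
      · have : y ∈ (Walk.cons h2 p).support := by
          rw [heq, Walk.support_concat]
          simp only [List.concat_eq_append, List.mem_append]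
          exact Or.inl r.end_mem_support
        simp only [Walk.support_cons, List.mem_cons] at this ⊢
        exact Or.inr this

variable [DecidableEq V] [Fintype V] [DecidableRel G.Adj]

omit [Fintype V] [DecidableRel G.Adj] in
lemma acyclic_induce_subset {s t : Finset V} (hst : s ⊆ t)
    (ht : (G.induce (↑t : Set V)).IsAcyclic) : (G.induce (↑s : Set V)).IsAcyclic := by
  rw [induce_isAcyclic_iff] at ht ⊢
  intro a c hc
  obtain ⟨y, hy, hyt⟩ := ht a c hc
  refine ⟨y, hy, fun hys => hyt ?_⟩
  simp only [Finset.mem_coe] at hys ⊢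
  exact hst hys

lemma acyclic_insert_pendant {s : Finset V} {x : V} (hx : x ∉ s)
    (hcard : (G.neighborFinset x ∩ s).card ≤ 1)
    (hs : (G.induce (↑s : Set V)).IsAcyclic) :
    (G.induce (↑(insert x s) : Set V)).IsAcyclic := by
  rw [induce_isAcyclic_iff] at hs ⊢
  intro a c hc
  by_contra hmem
  push_neg at hmem
  by_cases hxc : x ∈ c.support
  · have hd : (c.rotate x hxc).IsCycle := hc.rotate hxc
    have hdsub : ∀ y ∈ (c.rotate x hxc).support, y ∈ (insert x s : Finset V) := by
      intro y hy
      rw [(c.rotate x hxc).support_eq_cons, List.mem_cons] at hy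
      rcases hy with rfl | hy
      · exact Finset.mem_insert_self _ _
      · have hyt : y ∈ c.support.tail := (Walk.support_rotate c x hxc).mem_iff.mp hy
        have hyc : y ∈ c.support := by
          rw [c.support_eq_cons]; exact List.mem_cons_of_mem _ hyt
        simpa using hmem y hyc
    obtain ⟨b, b', hne, hab, hab', hbmem, hb'mem⟩ := hd.exists_two_neighbors
    have hbs : b ∈ s := by
      rcases Finset.mem_insert.mp (hdsub b hbmem) with rfl | h
      · exact absurd rfl hab.ne
      · exact h
    have hb's : b' ∈ s := by
      rcases Finset.mem_insert.mp (hdsub b' hb'mem) with rfl | h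
      · exact absurd rfl hab'.ne
      · exact h
    have hsub2 : ({b, b'} : Finset V) ⊆ G.neighborFinset x ∩ s := by
      intro z hz
      rcases Finset.mem_insert.mp hz with rfl | hz
      · exact Finset.mem_inter.mpr ⟨by simpa [SimpleGraph.mem_neighborFinset] using hab, hbs⟩
      · rw [Finset.mem_singleton] at hz; subst hz
        exact Finset.mem_inter.mpr ⟨by simpa [SimpleGraph.mem_neighborFinset] using hab', hb's⟩
    have hle := Finset.card_le_card hsub2
    rw [Finset.card_pair hne] at hle
    omega
  · obtain ⟨y, hy, hys⟩ := hs a c hc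
    apply hys
    have := hmem y hy
    simp only [Finset.coe_insert, Set.mem_insert_iff, Finset.mem_coe] at this
    rcases this with rfl | h
    · exact absurd hy hxc
    · exact h

end SimpleGraph

lemma aux_card_inter_insert_le {α : Type*} [DecidableEq α] (s t : Finset α) (a : α) :
    (s ∩ insert a t).card ≤ (s ∩ t).card + 1 := by
  have h : s ∩ insert a t ⊆ insert a (s ∩ t) := by
    intro z hz
    simp only [Finset.mem_inter, Finset.mem_insert] at hz ⊢
    tauto
  exact (Finset.card_le_card h).trans (Finset.card_insert_le _ _)

lemma aux_inter_insert_of_not_mem {α : Type*} [DecidableEq α] {s : Finset α} (t : Finset α)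
    {a : α} (h : a ∉ s) : s ∩ insert a t = s ∩ t := by
  rw [Finset.inter_comm, Finset.insert_inter_of_notMem h, Finset.inter_comm]

/-- If `G` is vertex-minimal with no `(𝓕₃,𝓕₄)`-partition, `(A₃, A₄)` is an
`(𝓕₃,𝓕₄)`-partition of `G − v`, `u` is the unique neighbor of `v` in `Aᵢ`, and
`deg_G(u) = i + 2`, then `u` has a neighbor `w` in `A₇₋ᵢ` that is
`A₇₋ᵢ`-saturated. -/
theorem unique_neighbor_has_saturated_neighbor {V : Type*} [Fintype V] [DecidableEq V]
    (G : SimpleGraph V) [DecidableRel G.Adj] (hmin : MinimalNoFF G)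
    (v u : V) (A : Finset V) (hA : FFPartOn G (Finset.univ \ {v}) A) :
    ((G.neighborFinset v ∩ A = {u}) → G.degree u = 5 →
      ∃ w ∈ G.neighborFinset u, w ∈ (Finset.univ \ {v}) \ A ∧
        (G.neighborFinset w ∩ ((Finset.univ \ {v}) \ A)).card = 4) ∧
    ((G.neighborFinset v ∩ ((Finset.univ \ {v}) \ A) = {u}) → G.degree u = 6 →
      ∃ w ∈ G.neighborFinset u, w ∈ A ∧
        (G.neighborFinset w ∩ A).card = 3) := by
  obtain ⟨hAS, hA3, hA4, hacA, hacB⟩ := hA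
  set B : Finset V := (Finset.univ \ {v}) \ A with hB
  have hvA : v ∉ A := fun h => by simpa using hAS h
  have hvB : v ∉ B := by simp [hB]
  have hAB : ∀ z, z ∉ A ∨ z ∉ B := by
    intro z
    by_cases h : z ∈ A
    · right; simp [hB, h]
    · left; exact h
  have htri : ∀ z : V, z = v ∨ z ∈ A ∨ z ∈ B := by
    intro z
    by_cases h1 : z = v
    · exact Or.inl h1
    · by_cases h2 : z ∈ A
      · exact Or.inr (Or.inl h2)
      · exact Or.inr (Or.inr (by simp [hB, h1, h2]))
  have hselfN : ∀ z : V, z ∉ G.neighborFinset z := by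
    intro z
    rw [SimpleGraph.mem_neighborFinset]
    exact fun h => G.irrefl h
  have hsplit : ∀ z : V, (G.neighborFinset z).card =
      (G.neighborFinset z ∩ {v}).card + (G.neighborFinset z ∩ A).card +
        (G.neighborFinset z ∩ B).card := by
    intro z
    have hun : G.neighborFinset z = (G.neighborFinset z ∩ {v}) ∪
        ((G.neighborFinset z ∩ A) ∪ (G.neighborFinset z ∩ B)) := by
      ext y
      simp only [Finset.mem_union, Finset.mem_inter, Finset.mem_singleton]
      constructor
      · intro hy; rcases htri y with h | h | h <;> tauto
      · tauto
    have hd2 : Disjoint (G.neighborFinset z ∩ A) (G.neighborFinset z ∩ B) := by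
      rw [Finset.disjoint_left]
      intro y hy1 hy2
      simp only [Finset.mem_inter] at hy1 hy2
      rcases hAB y with h | h
      exacts [h hy1.2, h hy2.2]
    have hd1 : Disjoint (G.neighborFinset z ∩ {v})
        ((G.neighborFinset z ∩ A) ∪ (G.neighborFinset z ∩ B)) := by
      rw [Finset.disjoint_left]
      intro y hy1 hy2
      simp only [Finset.mem_inter, Finset.mem_singleton] at hy1
      obtain ⟨-, rfl⟩ := hy1
      simp only [Finset.mem_union, Finset.mem_inter] at hy2
      rcases hy2 with h | h
      exacts [hvA h.2, hvB h.2]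
    have h' : (G.neighborFinset z).card = (G.neighborFinset z ∩ {v}).card +
        ((G.neighborFinset z ∩ A).card + (G.neighborFinset z ∩ B).card) := by
      conv_lhs => rw [hun]
      rw [Finset.card_union_of_disjoint hd1, Finset.card_union_of_disjoint hd2]
    omega
  constructor
  · -- Part 1 : i = 3
    intro h1 hdeg
    have humem : u ∈ G.neighborFinset v ∩ A := by rw [h1]; exact Finset.mem_singleton_self u
    have hu_in : u ∈ A := (Finset.mem_inter.mp humem).2
    have hadj : G.Adj v u := by
      have := (Finset.mem_inter.mp humem).1
      rwa [SimpleGraph.mem_neighborFinset] at this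
    have huv : u ≠ v := hadj.ne'
    have hvNu : v ∈ G.neighborFinset u := by
      rw [SimpleGraph.mem_neighborFinset]; exact hadj.symm
    have hnadjA : ∀ a ∈ A, a ≠ u → v ∉ G.neighborFinset a := by
      intro a haA hau hv
      have hva : a ∈ G.neighborFinset v := by
        rw [SimpleGraph.mem_neighborFinset] at hv ⊢; exact hv.symm
      have : a ∈ ({u} : Finset V) := h1 ▸ Finset.mem_inter.mpr ⟨hva, haA⟩
      exact hau (Finset.mem_singleton.mp this)
    have hBeq : Finset.univ \ insert v A = B := by
      ext z
      simp only [hB, Finset.mem_sdiff, Finset.mem_insert, Finset.mem_univ, true_and,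
        Finset.mem_singleton]
      tauto
    -- Step A : saturation of u in A
    have hsat : (G.neighborFinset u ∩ A).card = 3 := by
      by_contra hne
      have hle : (G.neighborFinset u ∩ A).card ≤ 2 := by
        have := hA3 u hu_in; omega
      apply hmin.1
      refine ⟨insert v A, Finset.subset_univ _, ?_, ?_, ?_, ?_⟩
      · intro a ha
        rcases Finset.mem_insert.mp ha with rfl | haA
        · rw [aux_inter_insert_of_not_mem _ (hselfN a), h1]; simp
        · by_cases hau : a = u
          · subst hau
            calc (G.neighborFinset a ∩ insert v A).card
                ≤ (G.neighborFinset a ∩ A).card + 1 := aux_card_inter_insert_le _ _ _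
              _ ≤ 3 := by omega
          · rw [aux_inter_insert_of_not_mem _ (hnadjA a haA hau)]
            exact hA3 a haA
      · intro b hb
        rw [hBeq] at hb ⊢
        exact hA4 b hb
      · exact G.acyclic_insert_pendant hvA (by rw [h1]; simp) hacA
      · rw [hBeq]; exact hacB
    -- Step B : unique neighbor w of u in B
    have hNuv : (G.neighborFinset u ∩ {v}).card = 1 := by
      rw [Finset.inter_singleton_of_mem hvNu, Finset.card_singleton]
    have hcard5 : (G.neighborFinset u).card = 5 := hdeg
    have hNuB : (G.neighborFinset u ∩ B).card = 1 := by
      have := hsplit u; omega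
    obtain ⟨w, hw⟩ := Finset.card_eq_one.mp hNuB
    have hwmem : w ∈ G.neighborFinset u ∩ B := by rw [hw]; exact Finset.mem_singleton_self w
    have hwNu : w ∈ G.neighborFinset u := (Finset.mem_inter.mp hwmem).1
    have hwB : w ∈ B := (Finset.mem_inter.mp hwmem).2
    have hadj_uw : G.Adj u w := by rwa [SimpleGraph.mem_neighborFinset] at hwNu
    have huB : u ∉ B := by
      rcases hAB u with h | h
      · exact absurd hu_in h
      · exact h
    refine ⟨w, hwNu, hwB, ?_⟩
    by_contra hne4
    have hwle : (G.neighborFinset w ∩ B).card ≤ 3 := by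
      have := hA4 w hwB; omega
    apply hmin.1
    have hNvAe : G.neighborFinset v ∩ A.erase u = ∅ := by
      apply Finset.eq_empty_of_forall_notMem
      intro z hz
      rw [Finset.mem_inter, Finset.mem_erase] at hz
      obtain ⟨hz1, hz2, hz3⟩ := hz
      have : z ∈ ({u} : Finset V) := h1 ▸ Finset.mem_inter.mpr ⟨hz1, hz3⟩
      exact hz2 (Finset.mem_singleton.mp this)
    have hBeq2 : Finset.univ \ insert v (A.erase u) = insert u B := by
      ext z
      simp only [hB, Finset.mem_sdiff, Finset.mem_insert, Finset.mem_univ, true_and,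
        Finset.mem_singleton, Finset.mem_erase]
      constructor
      · intro h
        push_neg at h
        obtain ⟨hzv, hz⟩ := h
        by_cases hzu : z = u
        · exact Or.inl hzu
        · exact Or.inr ⟨hzv, hz hzu⟩
      · rintro (rfl | ⟨hzv, hzA⟩)
        · push_neg
          exact ⟨huv, fun h => absurd rfl h⟩
        · push_neg
          exact ⟨hzv, fun _ => hzA⟩
    refine ⟨insert v (A.erase u), Finset.subset_univ _, ?_, ?_, ?_, ?_⟩
    · intro a ha
      rcases Finset.mem_insert.mp ha with rfl | haA
      · rw [aux_inter_insert_of_not_mem _ (hselfN a), hNvAe]; simp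
      · obtain ⟨hau, haA'⟩ := Finset.mem_erase.mp haA
        rw [aux_inter_insert_of_not_mem _ (hnadjA a haA' hau)]
        calc (G.neighborFinset a ∩ A.erase u).card
            ≤ (G.neighborFinset a ∩ A).card :=
              Finset.card_le_card (Finset.inter_subset_inter (Finset.Subset.refl _)
                (Finset.erase_subset _ _))
          _ ≤ 3 := hA3 a haA'
    · intro b hb
      rw [hBeq2] at hb ⊢
      rcases Finset.mem_insert.mp hb with rfl | hbB
      · rw [aux_inter_insert_of_not_mem _ (hselfN b), hw]; simp
      · by_cases hbw : b = w
        · subst hbw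
          calc (G.neighborFinset b ∩ insert u B).card
              ≤ (G.neighborFinset b ∩ B).card + 1 := aux_card_inter_insert_le _ _ _
            _ ≤ 4 := by omega
        · have hunb : u ∉ G.neighborFinset b := by
            intro h
            have hbu : b ∈ G.neighborFinset u := by
              rw [SimpleGraph.mem_neighborFinset] at h ⊢; exact h.symm
            have : b ∈ ({w} : Finset V) := hw ▸ Finset.mem_inter.mpr ⟨hbu, hbB⟩
            exact hbw (Finset.mem_singleton.mp this)
          rw [aux_inter_insert_of_not_mem _ hunb]
          exact hA4 b hbB
    · refine G.acyclic_insert_pendant (fun h => hvA (Finset.mem_erase.mp h).2) ?_ ?_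
      · rw [hNvAe]; simp
      · exact SimpleGraph.acyclic_induce_subset (Finset.erase_subset _ _) hacA
    · rw [hBeq2]
      exact G.acyclic_insert_pendant huB (by rw [hw]; simp) hacB
  · -- Part 2 : i = 4
    intro h1 hdeg
    have humem : u ∈ G.neighborFinset v ∩ B := by rw [h1]; exact Finset.mem_singleton_self u
    have hu_in : u ∈ B := (Finset.mem_inter.mp humem).2
    have hadj : G.Adj v u := by
      have := (Finset.mem_inter.mp humem).1
      rwa [SimpleGraph.mem_neighborFinset] at this
    have huv : u ≠ v := hadj.ne'
    have hvNu : v ∈ G.neighborFinset u := by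
      rw [SimpleGraph.mem_neighborFinset]; exact hadj.symm
    have huA : u ∉ A := by
      rcases hAB u with h | h
      · exact h
      · exact absurd hu_in h
    have hnadjB : ∀ b ∈ B, b ≠ u → v ∉ G.neighborFinset b := by
      intro b hbB hbu hv
      have hvb : b ∈ G.neighborFinset v := by
        rw [SimpleGraph.mem_neighborFinset] at hv ⊢; exact hv.symm
      have : b ∈ ({u} : Finset V) := h1 ▸ Finset.mem_inter.mpr ⟨hvb, hbB⟩
      exact hbu (Finset.mem_singleton.mp this)
    have hBeq : Finset.univ \ A = insert v B := by
      ext z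
      simp only [hB, Finset.mem_sdiff, Finset.mem_insert, Finset.mem_univ, true_and,
        Finset.mem_singleton]
      constructor
      · intro h
        by_cases hzv : z = v
        · exact Or.inl hzv
        · exact Or.inr ⟨hzv, h⟩
      · rintro (rfl | ⟨hzv, hzA⟩)
        · exact hvA
        · exact hzA
    -- Step A : saturation of u in B
    have hsat : (G.neighborFinset u ∩ B).card = 4 := by
      by_contra hne
      have hle : (G.neighborFinset u ∩ B).card ≤ 3 := by
        have := hA4 u hu_in; omega
      apply hmin.1
      refine ⟨A, Finset.subset_univ _, hA3, ?_, hacA, ?_⟩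
      · intro b hb
        rw [hBeq] at hb ⊢
        rcases Finset.mem_insert.mp hb with rfl | hbB
        · rw [aux_inter_insert_of_not_mem _ (hselfN b), h1]; simp
        · by_cases hbu : b = u
          · subst hbu
            calc (G.neighborFinset b ∩ insert v B).card
                ≤ (G.neighborFinset b ∩ B).card + 1 := aux_card_inter_insert_le _ _ _
              _ ≤ 4 := by omega
          · rw [aux_inter_insert_of_not_mem _ (hnadjB b hbB hbu)]
            exact hA4 b hbB
      · rw [hBeq]
        exact G.acyclic_insert_pendant hvB (by rw [h1]; simp) hacB
    -- Step B : unique neighbor w of u in A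
    have hNuv : (G.neighborFinset u ∩ {v}).card = 1 := by
      rw [Finset.inter_singleton_of_mem hvNu, Finset.card_singleton]
    have hcard6 : (G.neighborFinset u).card = 6 := hdeg
    have hNuA : (G.neighborFinset u ∩ A).card = 1 := by
      have := hsplit u; omega
    obtain ⟨w, hw⟩ := Finset.card_eq_one.mp hNuA
    have hwmem : w ∈ G.neighborFinset u ∩ A := by rw [hw]; exact Finset.mem_singleton_self w
    have hwNu : w ∈ G.neighborFinset u := (Finset.mem_inter.mp hwmem).1
    have hwA : w ∈ A := (Finset.mem_inter.mp hwmem).2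
    refine ⟨w, hwNu, hwA, ?_⟩
    by_contra hne3
    have hwle : (G.neighborFinset w ∩ A).card ≤ 2 := by
      have := hA3 w hwA; omega
    apply hmin.1
    have hNvBe : G.neighborFinset v ∩ B.erase u = ∅ := by
      apply Finset.eq_empty_of_forall_notMem
      intro z hz
      rw [Finset.mem_inter, Finset.mem_erase] at hz
      obtain ⟨hz1, hz2, hz3⟩ := hz
      have : z ∈ ({u} : Finset V) := h1 ▸ Finset.mem_inter.mpr ⟨hz1, hz3⟩
      exact hz2 (Finset.mem_singleton.mp this)
    have hBeq2 : Finset.univ \ insert u A = insert v (B.erase u) := by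
      ext z
      simp only [hB, Finset.mem_sdiff, Finset.mem_insert, Finset.mem_univ, true_and,
        Finset.mem_singleton, Finset.mem_erase]
      constructor
      · intro h
        push_neg at h
        obtain ⟨hzu, hzA⟩ := h
        by_cases hzv : z = v
        · exact Or.inl hzv
        · exact Or.inr ⟨hzu, hzv, hzA⟩
      · rintro (rfl | ⟨hzu, hzv, hzA⟩)
        · push_neg
          exact ⟨fun h => huv h.symm, hvA⟩
        · push_neg
          exact ⟨hzu, hzA⟩
    refine ⟨insert u A, Finset.subset_univ _, ?_, ?_, ?_, ?_⟩
    · intro a ha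
      rcases Finset.mem_insert.mp ha with rfl | haA
      · rw [aux_inter_insert_of_not_mem _ (hselfN a), hw]; simp
      · by_cases haw : a = w
        · subst haw
          calc (G.neighborFinset a ∩ insert u A).card
              ≤ (G.neighborFinset a ∩ A).card + 1 := aux_card_inter_insert_le _ _ _
            _ ≤ 3 := by omega
        · have huna : u ∉ G.neighborFinset a := by
            intro h
            have hau : a ∈ G.neighborFinset u := by
              rw [SimpleGraph.mem_neighborFinset] at h ⊢; exact h.symm
            have : a ∈ ({w} : Finset V) := hw ▸ Finset.mem_inter.mpr ⟨hau, haA⟩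
            exact haw (Finset.mem_singleton.mp this)
          rw [aux_inter_insert_of_not_mem _ huna]
          exact hA3 a haA
    · intro b hb
      rw [hBeq2] at hb ⊢
      rcases Finset.mem_insert.mp hb with rfl | hbB'
      · rw [aux_inter_insert_of_not_mem _ (hselfN b), hNvBe]; simp
      · obtain ⟨hbu, hbB⟩ := Finset.mem_erase.mp hbB'
        rw [aux_inter_insert_of_not_mem _ (hnadjB b hbB hbu)]
        calc (G.neighborFinset b ∩ B.erase u).card
            ≤ (G.neighborFinset b ∩ B).card :=
              Finset.card_le_card (Finset.inter_subset_inter (Finset.Subset.refl _)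
                (Finset.erase_subset _ _))
          _ ≤ 4 := hA4 b hbB
    · exact G.acyclic_insert_pendant huA (by rw [hw]; simp) hacA
    · rw [hBeq2]
      refine G.acyclic_insert_pendant (fun h => hvB (Finset.mem_erase.mp h).2) ?_ ?_
      · rw [hNvBe]; simp
      · exact SimpleGraph.acyclic_induce_subset (Finset.erase_subset _ _) hacB
end

section
/- In a vertex-minimal graph G with no (F_3,F_4)-partition, no 2-vertex has a neighbor of degree at most 4; that is, both neighbors of every degree-2 vertex have degree at least 5. -/
open SimpleGraph Finset

namespace FFHelp

variable {V : Type*}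

lemma isAcyclic_induce_mono (G : SimpleGraph V) {s t : Set V} (hst : s ⊆ t)
    (h : (G.induce t).IsAcyclic) : (G.induce s).IsAcyclic := by
  intro x c hc
  exact h (c.map (G.induceHomOfLE hst).toHom)
    (hc.map (G.induceHomOfLE hst).injective)

lemma exists_map_eq (G : SimpleGraph V) {s t : Set V} (hst : s ⊆ t) :
    ∀ {x y : ↥t} (p : (G.induce t).Walk x y), (∀ z ∈ p.support, (z : V) ∈ s) →
      ∀ (hx : (x : V) ∈ s) (hy : (y : V) ∈ s),
      ∃ q : (G.induce s).Walk ⟨x, hx⟩ ⟨y, hy⟩,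
        q.map (G.induceHomOfLE hst).toHom = p := by
  intro x y p
  induction p with
  | nil => exact fun _ hx _ => ⟨.nil, rfl⟩
  | @cons a b c h p ih =>
    intro hsupp hx hy
    have hb : (b : V) ∈ s := hsupp b (by simp)
    obtain ⟨q, hq⟩ := ih (fun z hz => hsupp z (by simp [hz])) hb hy
    refine ⟨.cons (by exact h) q, ?_⟩
    subst hq; rfl

lemma pendant_acyclic (G : SimpleGraph V) {s : Set V} {v : V} (hv : v ∉ s)
    (hone : ∀ a b : V, a ∈ s → b ∈ s → G.Adj v a → G.Adj v b → a = b)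
    (hacy : (G.induce s).IsAcyclic) : (G.induce (insert v s)).IsAcyclic := by
  classical
  intro x c hc
  by_cases hmem : (⟨v, Set.mem_insert v s⟩ : ↥(insert v s)) ∈ c.support
  · set v' : ↥(insert v s) := ⟨v, Set.mem_insert v s⟩ with hv'
    have hc' := hc.rotate hmem
    set c' := c.rotate v' hmem with hc'def
    clear_value c'
    obtain ⟨b, hadj, p, rfl⟩ : ∃ (b : ↥(insert v s)) (hadj : (G.induce (insert v s)).Adj v' b)
        (p : (G.induce (insert v s)).Walk b v'), c' = .cons hadj p := by
      cases c' with
      | nil => exact absurd rfl hc'.ne_nil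
      | cons h p => exact ⟨_, h, p, rfl⟩
    obtain ⟨m, r, hlast, rfl⟩ : ∃ (m : ↥(insert v s)) (r : (G.induce (insert v s)).Walk b m)
        (hlast : (G.induce (insert v s)).Adj m v'), p = r.concat hlast := by
      cases hrev : p.reverse with
      | nil =>
        exfalso
        have : p = .nil := by
          have := congrArg SimpleGraph.Walk.reverse hrev
          rwa [p.reverse_reverse] at this
        have h3 := hc'.three_le_length
        rw [this] at h3
        simp at h3
      | cons h2 p2 =>
        refine ⟨_, p2.reverse, h2.symm, ?_⟩
        have := congrArg SimpleGraph.Walk.reverse hrev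
        rw [p.reverse_reverse] at this
        rw [this, SimpleGraph.Walk.reverse_cons, ← SimpleGraph.Walk.concat_eq_append]
    -- b and m are neighbors of v in s
    have hab : G.Adj v (b : V) := hadj
    have ham : G.Adj v (m : V) := hlast.symm
    have hbs : (b : V) ∈ s := by
      have := b.2
      rcases Set.mem_insert_iff.mp this with h | h
      · exact absurd h hab.ne'
      · exact h
    have hms : (m : V) ∈ s := by
      have := m.2
      rcases Set.mem_insert_iff.mp this with h | h
      · exact absurd h ham.ne'
      · exact h
    have hbm : b = m := Subtype.ext (hone _ _ hbs hms hab ham)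
    subst hbm
    -- r is a closed walk with nodup support, hence nil
    have hnodup : (r.support.concat v').Nodup := by
      have := hc'.support_nodup
      rwa [SimpleGraph.Walk.support_cons, List.tail_cons,
        SimpleGraph.Walk.support_concat, ← List.concat_eq_append] at this
    have hrnodup : r.support.Nodup := by
      rw [List.concat_eq_append] at hnodup
      exact (List.nodup_append.mp hnodup).1
    have hrnil : r = .nil := by
      cases r with
      | nil => rfl
      | cons h3 r3 =>
        exfalso
        rw [SimpleGraph.Walk.support_cons] at hrnodup
        exact (List.nodup_cons.mp hrnodup).1 r3.end_mem_support
    have h3 := hc'.three_le_length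
    rw [hrnil] at h3
    simp [SimpleGraph.Walk.length_concat] at h3
  · have hsupp : ∀ z ∈ c.support, (z : V) ∈ s := by
      intro z hz
      rcases Set.mem_insert_iff.mp z.2 with h | h
      · exact absurd ((Subtype.ext h : z = ⟨v, Set.mem_insert v s⟩) ▸ hz) hmem
      · exact h
    have hx : (x : V) ∈ s := hsupp x c.start_mem_support
    obtain ⟨q, hq⟩ := exists_map_eq G (Set.subset_insert v s) c hsupp hx hx
    refine hacy q ?_
    have : (q.map (G.induceHomOfLE (Set.subset_insert v s)).toHom).IsCycle := hq ▸ hc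
    exact (SimpleGraph.Walk.map_isCycle_iff_of_injective
      (G.induceHomOfLE (Set.subset_insert v s)).injective).mp this

end FFHelp

/-- In a vertex-minimal graph with no `(𝓕₃,𝓕₄)`-partition, every neighbor of a
degree-2 vertex has degree at least 5. -/
theorem two_vertex_neighbors_deg_ge_five {V : Type*} [Fintype V] [DecidableEq V]
    (G : SimpleGraph V) [DecidableRel G.Adj] (hmin : MinimalNoFF G)
    (v u : V) (hv : G.degree v = 2) (hu : G.Adj v u) :
    5 ≤ G.degree u := by
  classical
  by_contra hcon
  push_neg at hcon
  have hdeg : G.degree u ≤ 4 := by omega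
  obtain ⟨hbad, hpart⟩ := hmin
  obtain ⟨A, hA0, hA3, hA4, hAcy, hBcy⟩ := hpart v
  set SA : Finset V := (Finset.univ \ {v}) \ A with hSAdef
  have huNv : u ∈ G.neighborFinset v := (G.mem_neighborFinset v u).mpr hu
  have hcard : (G.neighborFinset v).card = 2 := hv
  obtain ⟨w, hw⟩ : ∃ w, (G.neighborFinset v).erase u = {w} := by
    rw [← Finset.card_eq_one, Finset.card_erase_of_mem huNv, hcard]
  have hNv : G.neighborFinset v = insert u {w} := by
    rw [← hw, Finset.insert_erase huNv]
  have hnbr : ∀ x, G.Adj v x → x = u ∨ x = w := by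
    intro x hx
    have hx' : x ∈ G.neighborFinset v := (G.mem_neighborFinset v x).mpr hx
    rw [hNv] at hx'
    simpa using hx'
  have hadj_vw : G.Adj v w := by
    have : w ∈ G.neighborFinset v := by rw [hNv]; simp
    exact (G.mem_neighborFinset v w).mp this
  have huw : u ≠ w := by
    intro h
    rw [hNv, ← h] at hcard
    simp at hcard
  have hvu : u ≠ v := hu.ne'
  have hwv : w ≠ v := hadj_vw.ne'
  have hvA : v ∉ A := fun h => by simpa using (Finset.mem_sdiff.mp (hA0 h)).2
  have hvNu : v ∈ G.neighborFinset u := (G.mem_neighborFinset u v).mpr hu.symm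
  have hmemSA : ∀ x : V, x ∈ SA ↔ (x ≠ v ∧ x ∉ A) := by
    intro x
    simp [hSAdef, Finset.mem_sdiff]
  have hvSA : v ∉ SA := fun h => ((hmemSA v).mp h).1 rfl
  have hdegu : (G.neighborFinset u).card ≤ 4 := by
    rw [G.card_neighborFinset_eq_degree u]; exact hdeg
  -- bound on neighbors of u inside SA
  have hu3 : (G.neighborFinset u ∩ SA).card ≤ 3 := by
    have hsub : G.neighborFinset u ∩ SA ⊆ (G.neighborFinset u).erase v := by
      intro y hy
      rcases Finset.mem_inter.mp hy with ⟨h1, h2⟩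
      exact Finset.mem_erase.mpr ⟨((hmemSA y).mp h2).1, h1⟩
    have hc1 := Finset.card_le_card hsub
    rw [Finset.card_erase_of_mem hvNu] at hc1
    omega
  -- bound on neighbors of u inside A
  have huA3 : (G.neighborFinset u ∩ A).card ≤ 3 := by
    have hsub : G.neighborFinset u ∩ A ⊆ (G.neighborFinset u).erase v := by
      intro y hy
      rcases Finset.mem_inter.mp hy with ⟨h1, h2⟩
      exact Finset.mem_erase.mpr ⟨fun hyv => hvA (hyv ▸ h2), h1⟩
    have hc1 := Finset.card_le_card hsub
    rw [Finset.card_erase_of_mem hvNu] at hc1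
    omega
  have idA : (Finset.univ : Finset V) \ A = insert v SA := by
    ext x
    simp only [Finset.mem_sdiff, Finset.mem_univ, true_and, Finset.mem_insert, hmemSA]
    constructor
    · intro hx
      rcases eq_or_ne x v with h | h
      · exact Or.inl h
      · exact Or.inr ⟨h, hx⟩
    · rintro (rfl | ⟨_, hx⟩)
      · exact hvA
      · exact hx
  have idB : (Finset.univ : Finset V) \ insert v A = SA := by
    ext x
    simp only [Finset.mem_sdiff, Finset.mem_univ, true_and, Finset.mem_insert, hmemSA, not_or]
  have subsingleton_card_le : ∀ (X : Finset V) (a : V), X ⊆ {a} → X.card ≤ 1 := by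
    intro X a hX
    simpa using Finset.card_le_card hX
  have inter_insert_sub : ∀ (x a : V) (T : Finset V),
      G.neighborFinset x ∩ insert a T ⊆ insert a (G.neighborFinset x ∩ T) := by
    intro x a T y hy
    rcases Finset.mem_inter.mp hy with ⟨h1, h2⟩
    rcases Finset.mem_insert.mp h2 with h | h
    · exact h ▸ Finset.mem_insert_self _ _
    · exact Finset.mem_insert_of_mem (Finset.mem_inter.mpr ⟨h1, h⟩)
  have inter_insert_eq : ∀ (x a : V) (T : Finset V), ¬ G.Adj x a →
      G.neighborFinset x ∩ insert a T = G.neighborFinset x ∩ T := by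
    intro x a T hxa
    ext y
    simp only [Finset.mem_inter, Finset.mem_insert, G.mem_neighborFinset]
    constructor
    · rintro ⟨h1, rfl | h2⟩
      · exact absurd h1 hxa
      · exact ⟨h1, h2⟩
    · rintro ⟨h1, h2⟩
      exact ⟨h1, Or.inr h2⟩
  by_cases hwA : w ∈ A
  · -- candidate: A itself, with v going to the big part
    refine hbad ⟨A, Finset.subset_univ _, fun x hx => hA3 x hx, ?_, hAcy, ?_⟩
    · intro x hx
      rw [idA] at hx ⊢
      rcases Finset.mem_insert.mp hx with hxv | hxSA
      · subst hxv
        refine le_trans (subsingleton_card_le _ u ?_) (by norm_num)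
        intro y hy
        rcases Finset.mem_inter.mp hy with ⟨h1, h2⟩
        rcases hnbr y ((G.mem_neighborFinset x y).mp h1) with hyu | hyw
        · exact Finset.mem_singleton.mpr hyu
        · exfalso
          rw [hyw] at h2
          rcases Finset.mem_insert.mp h2 with h | h
          · exact hwv h
          · exact ((hmemSA w).mp h).2 hwA
      · obtain ⟨hxv, hxA⟩ := (hmemSA x).mp hxSA
        rcases eq_or_ne x u with rfl | hxu
        · calc (G.neighborFinset x ∩ insert v SA).card
              ≤ (insert v (G.neighborFinset x ∩ SA)).card :=
                Finset.card_le_card (inter_insert_sub x v SA)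
            _ ≤ (G.neighborFinset x ∩ SA).card + 1 := Finset.card_insert_le _ _
            _ ≤ 4 := by omega
        · have hnadj : ¬ G.Adj x v := by
            intro h
            rcases hnbr x h.symm with rfl | rfl
            · exact hxu rfl
            · exact hxA hwA
          rw [inter_insert_eq x v SA hnadj]
          exact hA4 x hxSA
    · rw [idA, Finset.coe_insert]
      refine FFHelp.pendant_acyclic G (by simpa using hvSA) ?_ hBcy
      intro a b ha hb hva hvb
      have ha' : a ∈ SA := by simpa using ha
      have hb' : b ∈ SA := by simpa using hb
      rcases hnbr a hva with rfl | rfl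
      · rcases hnbr b hvb with rfl | rfl
        · rfl
        · exact absurd hwA ((hmemSA b).mp hb').2
      · exact absurd hwA ((hmemSA a).mp ha').2
  · by_cases huA : u ∈ A
    · by_cases h3 : (G.neighborFinset u ∩ A).card ≤ 2
      · -- candidate: insert v A
        refine hbad ⟨insert v A, Finset.subset_univ _, ?_, ?_, ?_, ?_⟩
        · intro x hx
          rcases Finset.mem_insert.mp hx with hxv | hxA
          · subst hxv
            refine le_trans (subsingleton_card_le _ u ?_) (by norm_num)
            intro y hy
            rcases Finset.mem_inter.mp hy with ⟨h1, h2⟩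
            rcases hnbr y ((G.mem_neighborFinset x y).mp h1) with hyu | hyw
            · exact Finset.mem_singleton.mpr hyu
            · exfalso
              rw [hyw] at h2
              rcases Finset.mem_insert.mp h2 with h | h
              · exact hwv h
              · exact hwA h
          · rcases eq_or_ne x u with rfl | hxu
            · calc (G.neighborFinset x ∩ insert v A).card
                  ≤ (insert v (G.neighborFinset x ∩ A)).card :=
                    Finset.card_le_card (inter_insert_sub x v A)
                _ ≤ (G.neighborFinset x ∩ A).card + 1 := Finset.card_insert_le _ _
                _ ≤ 3 := by omega
            · have hnadj : ¬ G.Adj x v := by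
                intro h
                rcases hnbr x h.symm with rfl | rfl
                · exact hxu rfl
                · exact hwA hxA
              rw [inter_insert_eq x v A hnadj]
              exact hA3 x hxA
        · intro x hx
          rw [idB] at hx ⊢
          exact hA4 x hx
        · rw [Finset.coe_insert]
          refine FFHelp.pendant_acyclic G (by simpa using hvA) ?_ hAcy
          intro a b ha hb hva hvb
          have ha' : a ∈ A := by simpa using ha
          have hb' : b ∈ A := by simpa using hb
          rcases hnbr a hva with rfl | rfl
          · rcases hnbr b hvb with rfl | rfl
            · rfl
            · exact absurd hb' hwA
          · exact absurd ha' hwA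
        · rw [idB]
          exact hBcy
      · -- u has exactly 3 neighbors in A and degree 4; swap u out, put v in
        have hkey : G.neighborFinset u ∩ A = (G.neighborFinset u).erase v := by
          refine Finset.eq_of_subset_of_card_le ?_ ?_
          · intro y hy
            rcases Finset.mem_inter.mp hy with ⟨h1, h2⟩
            exact Finset.mem_erase.mpr ⟨fun hyv => hvA (hyv ▸ h2), h1⟩
          · rw [Finset.card_erase_of_mem hvNu]
            omega
        have hkey2 : ∀ y, G.Adj u y → y ≠ v → y ∈ A := by
          intro y hy hyv
          have : y ∈ (G.neighborFinset u).erase v :=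
            Finset.mem_erase.mpr ⟨hyv, (G.mem_neighborFinset u y).mpr hy⟩
          rw [← hkey] at this
          exact (Finset.mem_inter.mp this).2
        have idC : (Finset.univ : Finset V) \ insert v (A.erase u) = insert u SA := by
          ext x
          simp only [Finset.mem_sdiff, Finset.mem_univ, true_and, Finset.mem_insert,
            Finset.mem_erase, not_or, hmemSA]
          constructor
          · rintro ⟨h1, h2⟩
            rcases eq_or_ne x u with rfl | hxu
            · exact Or.inl rfl
            · exact Or.inr ⟨h1, fun hA' => h2 ⟨hxu, hA'⟩⟩
          · rintro (rfl | ⟨h1, h2⟩)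
            · exact ⟨hvu, fun h => h.1 rfl⟩
            · exact ⟨h1, fun h => h2 h.2⟩
        refine hbad ⟨insert v (A.erase u), Finset.subset_univ _, ?_, ?_, ?_, ?_⟩
        · intro x hx
          rcases Finset.mem_insert.mp hx with hxv | hxA
          · subst hxv
            have hempty : G.neighborFinset x ∩ insert x (A.erase u) = ∅ := by
              refine Finset.eq_empty_of_forall_notMem ?_
              intro y hy
              rcases Finset.mem_inter.mp hy with ⟨h1, h2⟩
              rcases hnbr y ((G.mem_neighborFinset x y).mp h1) with hyu | hyw
              · rw [hyu] at h2
                rcases Finset.mem_insert.mp h2 with h | h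
                · exact hvu h
                · exact (Finset.mem_erase.mp h).1 rfl
              · rw [hyw] at h2
                rcases Finset.mem_insert.mp h2 with h | h
                · exact hwv h
                · exact hwA (Finset.mem_of_mem_erase h)
            rw [hempty]
            simp
          · obtain ⟨hxu, hxA'⟩ := Finset.mem_erase.mp hxA
            have hnadj : ¬ G.Adj x v := by
              intro h
              rcases hnbr x h.symm with rfl | rfl
              · exact hxu rfl
              · exact hwA hxA'
            have hsub : G.neighborFinset x ∩ insert v (A.erase u) ⊆
                G.neighborFinset x ∩ A := by
              intro y hy
              rcases Finset.mem_inter.mp hy with ⟨h1, h2⟩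
              rcases Finset.mem_insert.mp h2 with rfl | h
              · exact absurd ((G.mem_neighborFinset x y).mp h1) hnadj
              · exact Finset.mem_inter.mpr ⟨h1, Finset.mem_of_mem_erase h⟩
            exact le_trans (Finset.card_le_card hsub) (hA3 x hxA')
        · intro x hx
          rw [idC] at hx ⊢
          rcases Finset.mem_insert.mp hx with hxu | hxSA
          · subst hxu
            have hempty : G.neighborFinset x ∩ insert x SA = ∅ := by
              refine Finset.eq_empty_of_forall_notMem ?_
              intro y hy
              rcases Finset.mem_inter.mp hy with ⟨h1, h2⟩
              have hadjy : G.Adj x y := (G.mem_neighborFinset x y).mp h1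
              rcases Finset.mem_insert.mp h2 with hyx | h
              · exact G.irrefl (hyx ▸ hadjy)
              · obtain ⟨hyv, hyA⟩ := (hmemSA y).mp h
                exact hyA (hkey2 y hadjy hyv)
            rw [hempty]
            simp
          · have hnadj : ¬ G.Adj x u := by
              intro h
              obtain ⟨hxv, hxA⟩ := (hmemSA x).mp hxSA
              exact hxA (hkey2 x h.symm hxv)
            rw [inter_insert_eq x u SA hnadj]
            exact hA4 x hxSA
        · rw [Finset.coe_insert]
          refine FFHelp.pendant_acyclic G ?_ ?_ ?_
          · intro h
            have h' : v ∈ A.erase u := by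
              rw [← Finset.mem_coe]
              simpa using h
            exact hvA (Finset.mem_of_mem_erase h')
          · intro a b ha hb hva hvb
            exfalso
            have ha' : a ∈ A.erase u := by
              rw [← Finset.mem_coe]
              simpa using ha
            rcases hnbr a hva with hau | haw
            · exact (Finset.mem_erase.mp ha').1 hau
            · exact hwA (haw ▸ Finset.mem_of_mem_erase ha')
          · exact FFHelp.isAcyclic_induce_mono G
              (Finset.coe_subset.mpr (Finset.erase_subset u A)) hAcy
        · rw [idC, Finset.coe_insert]
          refine FFHelp.pendant_acyclic G ?_ ?_ hBcy
          · intro h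
            have : u ∈ SA := by simpa using h
            exact ((hmemSA u).mp this).2 huA
          · intro a b ha hb hua hub
            exfalso
            have ha' : a ∈ SA := by simpa using ha
            obtain ⟨hav, haA⟩ := (hmemSA a).mp ha'
            exact haA (hkey2 a hua hav)
    · -- u outside A, w outside A : candidate insert v A
      have hwSA : w ∈ SA := (hmemSA w).mpr ⟨hwv, hwA⟩
      refine hbad ⟨insert v A, Finset.subset_univ _, ?_, ?_, ?_, ?_⟩
      · intro x hx
        rcases Finset.mem_insert.mp hx with hxv | hxA
        · subst hxv
          have hempty : G.neighborFinset x ∩ insert x A = ∅ := by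
            refine Finset.eq_empty_of_forall_notMem ?_
            intro y hy
            rcases Finset.mem_inter.mp hy with ⟨h1, h2⟩
            rcases hnbr y ((G.mem_neighborFinset x y).mp h1) with hyu | hyw
            · rw [hyu] at h2
              rcases Finset.mem_insert.mp h2 with h | h
              · exact hvu h
              · exact huA h
            · rw [hyw] at h2
              rcases Finset.mem_insert.mp h2 with h | h
              · exact hwv h
              · exact hwA h
          rw [hempty]
          simp
        · have hnadj : ¬ G.Adj x v := by
            intro h
            rcases hnbr x h.symm with rfl | rfl
            · exact huA hxA
            · exact hwA hxA
          rw [inter_insert_eq x v A hnadj]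
          exact hA3 x hxA
      · intro x hx
        rw [idB] at hx ⊢
        exact hA4 x hx
      · rw [Finset.coe_insert]
        refine FFHelp.pendant_acyclic G (by simpa using hvA) ?_ hAcy
        intro a b ha hb hva hvb
        exfalso
        have ha' : a ∈ A := by simpa using ha
        rcases hnbr a hva with rfl | rfl
        · exact huA ha'
        · exact hwA ha'
      · rw [idB]
        exact hBcy
end

section
/- In a vertex-minimal graph G with no (F_3,F_4)-partition, there is no triangle xyz where deg(x) = 2, deg(y) = 5, and deg(z) ≤ 6 (no (2,5,6⁻)-face). -/
open SimpleGraph Finset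

section Aux

variable {V : Type*} {G : SimpleGraph V}

/-- In a cycle, the start vertex has two distinct neighbours on the cycle. -/
lemma cycle_start_two_nbrs {w : V} {c : G.Walk w w} (hc : c.IsCycle) :
    ∃ a b : V, a ≠ b ∧ G.Adj w a ∧ G.Adj w b ∧ a ∈ c.support ∧ b ∈ c.support := by
  cases c with
  | nil => simpa using hc.three_le_length
  | @cons _ u _ h p =>
    obtain ⟨b, h2, q, hq⟩ := Walk.exists_eq_cons_of_ne h.ne p.reverse
    have hbe : s(w, b) ∈ p.edges := by
      have : s(w, b) ∈ p.reverse.edges := by rw [hq]; simp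
      rwa [Walk.edges_reverse, List.mem_reverse] at this
    have hbs : b ∈ p.support := Walk.snd_mem_support_of_mem_edges p hbe
    refine ⟨u, b, ?_, h, h2, by simp, by simp [hbs]⟩
    rintro rfl
    rw [Walk.cons_isCycle_iff] at hc
    exact hc.2 hbe

/-- In a cycle, every vertex of the cycle has two distinct neighbours on the cycle. -/
lemma cycle_two_nbrs [DecidableEq V] {v w : V} {c : G.Walk v v} (hc : c.IsCycle)
    (hw : w ∈ c.support) :
    ∃ a b : V, a ≠ b ∧ G.Adj w a ∧ G.Adj w b ∧ a ∈ c.support ∧ b ∈ c.support := by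
  obtain ⟨a, b, hab, ha, hb, has, hbs⟩ := cycle_start_two_nbrs (hc.rotate hw)
  have hperm := c.support_rotate w hw
  have key : ∀ {t : V}, G.Adj w t → t ∈ (c.rotate w hw).support → t ∈ c.support := by
    intro t hadj ht
    rw [Walk.support_eq_cons] at ht
    rcases List.mem_cons.mp ht with rfl | ht'
    · exact absurd rfl hadj.ne
    · exact List.mem_of_mem_tail (hperm.mem_iff.mp ht')
  exact ⟨a, b, hab, ha, hb, key ha has, key hb hbs⟩

/-- Lift a walk of `G` whose support lies in `s` to a walk of the induced subgraph on `s`. -/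
def liftWalk {s : Set V} : ∀ {u v : V} (p : G.Walk u v) (hp : ∀ x ∈ p.support, x ∈ s),
    (G.induce s).Walk ⟨u, hp u p.start_mem_support⟩ ⟨v, hp v p.end_mem_support⟩
  | _, _, Walk.nil, _ => Walk.nil
  | _, _, Walk.cons h p, hp =>
      Walk.cons (by exact h) (liftWalk p fun x hx => hp x (by simp [hx]))

lemma liftWalk_map {s : Set V} : ∀ {u v : V} (p : G.Walk u v) (hp : ∀ x ∈ p.support, x ∈ s),
    (liftWalk p hp).map (Embedding.induce s).toHom = p
  | _, _, Walk.nil, _ => rfl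
  | _, _, Walk.cons h p, hp => by
      simp only [liftWalk, Walk.map_cons]
      exact congrArg (Walk.cons h) (liftWalk_map p _)

/-- Acyclicity of an induced subgraph, phrased via cycles of the ambient graph. -/
lemma isAcyclic_induce_iff {s : Set V} :
    (G.induce s).IsAcyclic ↔
      ∀ ⦃v : V⦄ (c : G.Walk v v), c.IsCycle → ¬ ∀ x ∈ c.support, x ∈ s := by
  have hinj : Function.Injective ((Embedding.induce s).toHom : G.induce s →g G) :=
    (Embedding.induce (G := G) s).injective
  constructor
  · intro hac v c hc hsub
    have : (liftWalk c hsub).IsCycle := by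
      rw [← Walk.map_isCycle_iff_of_injective hinj, liftWalk_map]; exact hc
    exact hac _ this
  · intro h a c hc
    refine h (c.map (Embedding.induce s).toHom) (hc.map hinj) ?_
    intro x hx
    rw [Walk.support_map] at hx
    obtain ⟨⟨x', hx'⟩, _, rfl⟩ := List.mem_map.mp hx
    exact hx'

lemma acyclic_induce_mono [DecidableEq V] {s t : Finset V} (hst : s ⊆ t)
    (ht : (G.induce (↑t : Set V)).IsAcyclic) : (G.induce (↑s : Set V)).IsAcyclic := by
  rw [isAcyclic_induce_iff] at ht ⊢
  intro v c hc hsub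
  exact ht c hc fun x hx => by simpa using hst (by simpa using hsub x hx)

/-- Adding a vertex with at most one neighbour inside keeps an induced subgraph acyclic. -/
lemma acyclic_insert [Fintype V] [DecidableEq V] [DecidableRel G.Adj] {s : Finset V} {w : V}
    (hs : (G.induce (↑s : Set V)).IsAcyclic)
    (hw : (G.neighborFinset w ∩ s).card ≤ 1) :
    (G.induce (↑(insert w s) : Set V)).IsAcyclic := by
  rw [isAcyclic_induce_iff] at hs ⊢
  intro v c hc hsub
  by_cases hmem : w ∈ c.support
  · obtain ⟨a, b, hab, ha, hb, has, hbs⟩ := cycle_two_nbrs hc hmem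
    have hma : a ∈ s := by
      have := hsub a has; simp at this
      rcases this with rfl | h; · exact absurd rfl ha.ne'
      · exact h
    have hmb : b ∈ s := by
      have := hsub b hbs; simp at this
      rcases this with rfl | h; · exact absurd rfl hb.ne'
      · exact h
    exact hab (Finset.card_le_one.mp hw a
      (Finset.mem_inter.mpr ⟨(G.mem_neighborFinset w a).mpr ha, hma⟩) b
      (Finset.mem_inter.mpr ⟨(G.mem_neighborFinset w b).mpr hb, hmb⟩))
  · refine hs c hc fun x hx => ?_
    have := hsub x hx; simp at this
    rcases this with rfl | h
    · exact absurd hx hmem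
    · simpa using h

end Aux

section Ext

variable {V : Type*} [Fintype V] [DecidableEq V] {G : SimpleGraph V} [DecidableRel G.Adj]

lemma inter_insert_of_not_adj {v w : V} (h : ¬ G.Adj v w) (s : Finset V) :
    G.neighborFinset v ∩ insert w s = G.neighborFinset v ∩ s := by
  ext u
  simp only [Finset.mem_inter, mem_neighborFinset, Finset.mem_insert]
  constructor
  · rintro ⟨hadj, rfl | hu⟩
    · exact absurd hadj h
    · exact ⟨hadj, hu⟩
  · rintro ⟨hadj, hu⟩; exact ⟨hadj, Or.inr hu⟩

lemma inter_insert_self (v : V) (s : Finset V) :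
    G.neighborFinset v ∩ insert v s = G.neighborFinset v ∩ s :=
  inter_insert_of_not_adj (G.irrefl) s

/-- Extend a partition of `G - x` by putting `x` on the `A₃` side. -/
lemma extend_into_A {x : V} {A : Finset V} (hA : FFPartOn G (Finset.univ \ {x}) A)
    (hdeg : ∀ v ∈ A, G.Adj x v → (G.neighborFinset v ∩ A).card ≤ 2)
    (hnb : (G.neighborFinset x ∩ A).card ≤ 1) :
    FFPartOn G Finset.univ (insert x A) := by
  obtain ⟨hsub, hd3, hd4, hac3, hac4⟩ := hA
  have hxA : x ∉ A := fun h => by simpa using hsub h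
  have hcompl : Finset.univ \ insert x A = (Finset.univ \ {x}) \ A := by
    ext v; simp [and_comm]
  refine ⟨Finset.subset_univ _, ?_, ?_, ?_, ?_⟩
  · intro v hv
    rcases Finset.mem_insert.mp hv with rfl | hv
    · rw [inter_insert_self]
      exact hnb.trans (by norm_num)
    · by_cases hadj : G.Adj v x
      · calc (G.neighborFinset v ∩ insert x A).card
            ≤ (insert x (G.neighborFinset v ∩ A)).card := by
              apply Finset.card_le_card
              intro u hu
              simp only [Finset.mem_inter, Finset.mem_insert] at hu ⊢
              tauto
          _ ≤ (G.neighborFinset v ∩ A).card + 1 := Finset.card_insert_le _ _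
          _ ≤ 3 := by have := hdeg v hv hadj.symm; omega
      · rw [inter_insert_of_not_adj hadj]
        exact hd3 v hv
  · rw [hcompl]; exact hd4
  · exact acyclic_insert hac3 hnb
  · rw [hcompl]; exact hac4

/-- Extend a partition of `G - x` by putting `x` on the `A₄` side. -/
lemma extend_into_B {x : V} {A : Finset V} (hA : FFPartOn G (Finset.univ \ {x}) A)
    (hdeg : ∀ v ∈ (Finset.univ \ {x}) \ A, G.Adj x v →
      (G.neighborFinset v ∩ ((Finset.univ \ {x}) \ A)).card ≤ 3)
    (hnb : (G.neighborFinset x ∩ ((Finset.univ \ {x}) \ A)).card ≤ 1) :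
    FFPartOn G Finset.univ A := by
  obtain ⟨hsub, hd3, hd4, hac3, hac4⟩ := hA
  have hxA : x ∉ A := fun h => by simpa using hsub h
  set B : Finset V := (Finset.univ \ {x}) \ A with hB
  have hcompl : Finset.univ \ A = insert x B := by
    ext v; by_cases hvx : v = x <;> simp [hB, hvx, hxA]
  refine ⟨Finset.subset_univ _, hd3, ?_, hac3, ?_⟩
  · intro v hv
    rw [hcompl] at hv ⊢
    rcases Finset.mem_insert.mp hv with rfl | hv
    · rw [inter_insert_self]
      exact hnb.trans (by norm_num)
    · by_cases hadj : G.Adj v x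
      · calc (G.neighborFinset v ∩ insert x B).card
            ≤ (insert x (G.neighborFinset v ∩ B)).card := by
              apply Finset.card_le_card
              intro u hu
              simp only [Finset.mem_inter, Finset.mem_insert] at hu ⊢
              tauto
          _ ≤ (G.neighborFinset v ∩ B).card + 1 := Finset.card_insert_le _ _
          _ ≤ 4 := by have := hdeg v hv hadj.symm; omega
      · rw [inter_insert_of_not_adj hadj]
        exact hd4 v hv
  · rw [hcompl]
    exact acyclic_insert hac4 hnb

end Ext

/-- In a vertex-minimal graph with no `(𝓕₃,𝓕₄)`-partition, there is no triangle
`xyz` with `deg x = 2`, `deg y = 5`, and `deg z ≤ 6`. -/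
theorem no_256_face {V : Type*} [Fintype V] [DecidableEq V]
    (G : SimpleGraph V) [DecidableRel G.Adj] (hmin : MinimalNoFF G) :
    ¬ ∃ x y z : V, G.Adj x y ∧ G.Adj y z ∧ G.Adj z x ∧
      G.degree x = 2 ∧ G.degree y = 5 ∧ G.degree z ≤ 6 := by
  rintro ⟨x, y, z, hxy, hyz, hzx, hdx, hdy, hdz⟩
  obtain ⟨hnoG, hdel⟩ := hmin
  obtain ⟨A, hA⟩ := hdel x
  have hA2 := hA
  obtain ⟨hsub, hd3, hd4, hac3, hac4⟩ := hA2
  have hyx : y ≠ x := hxy.ne'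
  have hzx' : z ≠ x := hzx.ne
  have hyz' : y ≠ z := hyz.ne
  have hxA : x ∉ A := fun h => by have := hsub h; simp at this
  have hxB : x ∉ (Finset.univ \ ({x} : Finset V)) \ A := by simp
  have hyS : y ∈ Finset.univ \ ({x} : Finset V) := by simp [hyx]
  have hzS : z ∈ Finset.univ \ ({x} : Finset V) := by simp [hzx']
  have hcard1 : ∀ (s : Finset V) (t : V), (∀ u ∈ s, u = t) → s.card ≤ 1 := by
    intro s t h
    refine (Finset.card_le_card fun u hu => Finset.mem_singleton.mpr (h u hu)).trans ?_
    simp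
  -- the neighborhood of x is exactly {y, z}
  have hNx : G.neighborFinset x = {y, z} := by
    refine (Finset.eq_of_subset_of_card_le ?_ ?_).symm
    · intro u hu
      simp only [Finset.mem_insert, Finset.mem_singleton] at hu
      rcases hu with rfl | rfl
      · exact (G.mem_neighborFinset x u).mpr hxy
      · exact (G.mem_neighborFinset x u).mpr hzx.symm
    · rw [G.card_neighborFinset_eq_degree, hdx]
      have h2 : ({y, z} : Finset V).card = 2 := by
        rw [Finset.card_insert_of_notMem (by simp [hyz']), Finset.card_singleton]
      omega
  have hAdjx : ∀ u : V, G.Adj x u → u = y ∨ u = z := by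
    intro u hu
    have : u ∈ G.neighborFinset x := (G.mem_neighborFinset x u).mpr hu
    rw [hNx] at this; simpa using this
  have hNxy : y ∈ G.neighborFinset x := (G.mem_neighborFinset x y).mpr hxy
  have hNxz : z ∈ G.neighborFinset x := (G.mem_neighborFinset x z).mpr hzx.symm
  by_cases hyA : y ∈ A <;> by_cases hzA : z ∈ A
  · -- Case 1 : y, z ∈ A.  Put x on the A₄ side.
    refine hnoG ⟨A, extend_into_B hA ?_ ?_⟩
    · intro v hv hadj
      have hvA : v ∉ A := (Finset.mem_sdiff.mp hv).2
      rcases hAdjx v hadj with rfl | rfl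
      · exact absurd hyA hvA
      · exact absurd hzA hvA
    · refine hcard1 _ y fun u hu => ?_
      obtain ⟨hu1, hu2⟩ := Finset.mem_inter.mp hu
      have hu3 : u ∉ A := (Finset.mem_sdiff.mp hu2).2
      rw [hNx] at hu1
      rcases Finset.mem_insert.mp hu1 with rfl | hu1
      · rfl
      · rw [Finset.mem_singleton] at hu1; subst hu1; exact absurd hzA hu3
  · -- Case 3 : y ∈ A, z ∉ A.
    have hzB : z ∈ (Finset.univ \ ({x} : Finset V)) \ A := Finset.mem_sdiff.mpr ⟨hzS, hzA⟩
    by_cases h4 : (G.neighborFinset z ∩ ((Finset.univ \ ({x} : Finset V)) \ A)).card ≤ 3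
    · -- x can go to the A₄ side
      refine hnoG ⟨A, extend_into_B hA ?_ ?_⟩
      · intro v hv hadj
        rcases hAdjx v hadj with rfl | rfl
        · exact absurd hyA (Finset.mem_sdiff.mp hv).2
        · exact h4
      · refine hcard1 _ z fun u hu => ?_
        obtain ⟨hu1, hu2⟩ := Finset.mem_inter.mp hu
        have hu3 : u ∉ A := (Finset.mem_sdiff.mp hu2).2
        rw [hNx] at hu1
        rcases Finset.mem_insert.mp hu1 with rfl | hu1
        · exact absurd hyA hu3
        · exact Finset.mem_singleton.mp hu1
    by_cases h3 : (G.neighborFinset y ∩ A).card ≤ 2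
    · -- x can go to the A₃ side
      refine hnoG ⟨_, extend_into_A hA ?_ ?_⟩
      · intro v hv hadj
        rcases hAdjx v hadj with rfl | rfl
        · exact h3
        · exact absurd hv hzA
      · refine hcard1 _ y fun u hu => ?_
        obtain ⟨hu1, hu2⟩ := Finset.mem_inter.mp hu
        rw [hNx] at hu1
        rcases Finset.mem_insert.mp hu1 with rfl | hu1
        · rfl
        · rw [Finset.mem_singleton] at hu1; subst hu1; exact absurd hu2 hzA
    · -- the swap case: y is A₃-saturated, z is A₄-saturated
      push_neg at h3 h4
      set B : Finset V := (Finset.univ \ ({x} : Finset V)) \ A with hBdef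
      have hBA : Disjoint B A := Finset.sdiff_disjoint
      have hy3 : (G.neighborFinset y ∩ A).card = 3 := le_antisymm (hd3 y hyA) h3
      have hz4 : (G.neighborFinset z ∩ B).card = 4 := le_antisymm (hd4 z hzB) h4
      -- z has y as its unique A₃-neighbour
      have hz1 : (G.neighborFinset z ∩ A).card ≤ 1 := by
        have hdisj : Disjoint (G.neighborFinset z ∩ B) (G.neighborFinset z ∩ A) :=
          hBA.mono Finset.inter_subset_right Finset.inter_subset_right
        have hsubU : insert x ((G.neighborFinset z ∩ B) ∪ (G.neighborFinset z ∩ A)) ⊆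
            G.neighborFinset z := by
          intro u hu
          rcases Finset.mem_insert.mp hu with rfl | hu
          · exact (G.mem_neighborFinset z u).mpr hzx
          · rcases Finset.mem_union.mp hu with h | h
            exacts [(Finset.mem_inter.mp h).1, (Finset.mem_inter.mp h).1]
        have hxU : x ∉ (G.neighborFinset z ∩ B) ∪ (G.neighborFinset z ∩ A) := by
          rw [Finset.mem_union]
          rintro (h | h)
          · exact hxB (Finset.mem_inter.mp h).2
          · exact hxA (Finset.mem_inter.mp h).2
        have hcard := Finset.card_le_card hsubU
        rw [Finset.card_insert_of_notMem hxU, Finset.card_union_of_disjoint hdisj, hz4,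
          G.card_neighborFinset_eq_degree] at hcard
        omega
      have hzAy : ∀ u ∈ G.neighborFinset z ∩ A, u = y := fun u hu =>
        Finset.card_le_one.mp hz1 u hu y
          (Finset.mem_inter.mpr ⟨(G.mem_neighborFinset z y).mpr hyz.symm, hyA⟩)
      -- y has z as its unique A₄-neighbour
      have hy1 : (G.neighborFinset y ∩ B).card ≤ 1 := by
        have hdisj : Disjoint (G.neighborFinset y ∩ A) (G.neighborFinset y ∩ B) :=
          hBA.symm.mono Finset.inter_subset_right Finset.inter_subset_right
        have hsubU : insert x ((G.neighborFinset y ∩ A) ∪ (G.neighborFinset y ∩ B)) ⊆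
            G.neighborFinset y := by
          intro u hu
          rcases Finset.mem_insert.mp hu with rfl | hu
          · exact (G.mem_neighborFinset y u).mpr hxy.symm
          · rcases Finset.mem_union.mp hu with h | h
            exacts [(Finset.mem_inter.mp h).1, (Finset.mem_inter.mp h).1]
        have hxU : x ∉ (G.neighborFinset y ∩ A) ∪ (G.neighborFinset y ∩ B) := by
          rw [Finset.mem_union]
          rintro (h | h)
          · exact hxA (Finset.mem_inter.mp h).2
          · exact hxB (Finset.mem_inter.mp h).2
        have hcard := Finset.card_le_card hsubU
        rw [Finset.card_insert_of_notMem hxU, Finset.card_union_of_disjoint hdisj, hy3,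
          G.card_neighborFinset_eq_degree, hdy] at hcard
        omega
      have hyBz : ∀ u ∈ G.neighborFinset y ∩ B, u = z := fun u hu =>
        Finset.card_le_one.mp hy1 u hu z
          (Finset.mem_inter.mpr ⟨(G.mem_neighborFinset y z).mpr hyz, hzB⟩)
      -- the swapped partition
      set A' : Finset V := insert x (insert z (A.erase y)) with hA'def
      have hyA' : y ∉ A' := by simp [hA'def, hyx, hyz']
      have hcompl : Finset.univ \ A' = insert y (B.erase z) := by
        ext v
        constructor
        · intro hv
          have hv' : v ∉ A' := (Finset.mem_sdiff.mp hv).2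
          rw [hA'def] at hv'
          simp only [Finset.mem_insert, Finset.mem_erase, not_or] at hv'
          obtain ⟨hvx, hvz, hvA⟩ := hv'
          rw [Finset.mem_insert]
          by_cases hvy : v = y
          · exact Or.inl hvy
          · refine Or.inr (Finset.mem_erase.mpr ⟨hvz, ?_⟩)
            rw [hBdef, Finset.mem_sdiff, Finset.mem_sdiff]
            exact ⟨⟨Finset.mem_univ v, by simpa using hvx⟩, fun h => hvA ⟨hvy, h⟩⟩
        · intro hv
          rw [Finset.mem_sdiff]
          refine ⟨Finset.mem_univ v, ?_⟩
          rcases Finset.mem_insert.mp hv with rfl | hv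
          · exact hyA'
          · obtain ⟨hvz, hvB⟩ := Finset.mem_erase.mp hv
            rw [hBdef, Finset.mem_sdiff, Finset.mem_sdiff] at hvB
            obtain ⟨⟨-, hvx⟩, hvA⟩ := hvB
            rw [hA'def]
            simp only [Finset.mem_insert, Finset.mem_erase, not_or]
            exact ⟨by simpa using hvx, hvz, fun h => hvA h.2⟩
      have hdeg3' : ∀ v ∈ A', (G.neighborFinset v ∩ A').card ≤ 3 := by
        intro v hv
        rw [hA'def] at hv
        rcases Finset.mem_insert.mp hv with rfl | hv
        · -- v = x
          refine (hcard1 _ z fun u hu => ?_).trans (by norm_num)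
          obtain ⟨hu1, hu2⟩ := Finset.mem_inter.mp hu
          rw [hNx] at hu1
          rcases Finset.mem_insert.mp hu1 with rfl | hu1
          · exact absurd hu2 hyA'
          · exact Finset.mem_singleton.mp hu1
        rcases Finset.mem_insert.mp hv with rfl | hv
        · -- v = z
          refine (hcard1 _ x fun u hu => ?_).trans (by norm_num)
          obtain ⟨hu1, hu2⟩ := Finset.mem_inter.mp hu
          rw [hA'def] at hu2
          rcases Finset.mem_insert.mp hu2 with rfl | hu2
          · rfl
          rcases Finset.mem_insert.mp hu2 with rfl | hu2
          · exact absurd ((G.mem_neighborFinset u u).mp hu1) (G.irrefl)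
          · obtain ⟨huy, huA⟩ := Finset.mem_erase.mp hu2
            exact absurd (hzAy u (Finset.mem_inter.mpr ⟨hu1, huA⟩)) huy
        · -- v ∈ A.erase y
          obtain ⟨hvy, hvA⟩ := Finset.mem_erase.mp hv
          refine (Finset.card_le_card ?_).trans (hd3 v hvA)
          intro u hu
          obtain ⟨hu1, hu2⟩ := Finset.mem_inter.mp hu
          refine Finset.mem_inter.mpr ⟨hu1, ?_⟩
          rw [hA'def] at hu2
          rcases Finset.mem_insert.mp hu2 with huX | hu2
          · -- u = x : impossible since v ∈ A and v ≠ y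
            have hadjxv : G.Adj x v := by
              rw [← huX]; exact ((G.mem_neighborFinset v u).mp hu1).symm
            rcases hAdjx v hadjxv with rfl | rfl
            · exact absurd rfl hvy
            · exact absurd hvA hzA
          rcases Finset.mem_insert.mp hu2 with rfl | hu2
          · -- u = z : impossible since z's unique A-neighbour is y
            have : v ∈ G.neighborFinset u ∩ A :=
              Finset.mem_inter.mpr ⟨(G.mem_neighborFinset u v).mpr
                ((G.mem_neighborFinset v u).mp hu1).symm, hvA⟩
            exact absurd (hzAy v this) hvy
          · exact (Finset.mem_erase.mp hu2).2
      have hdeg4' : ∀ v ∈ Finset.univ \ A', (G.neighborFinset v ∩ (Finset.univ \ A')).card ≤ 4 := by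
        intro v hv
        rw [hcompl] at hv ⊢
        rcases Finset.mem_insert.mp hv with rfl | hv
        · -- v = y
          refine (hcard1 _ z fun u hu => ?_).trans (by norm_num)
          obtain ⟨hu1, hu2⟩ := Finset.mem_inter.mp hu
          rcases Finset.mem_insert.mp hu2 with rfl | hu2
          · exact absurd ((G.mem_neighborFinset u u).mp hu1) (G.irrefl)
          · obtain ⟨huz, huB⟩ := Finset.mem_erase.mp hu2
            exact absurd (hyBz u (Finset.mem_inter.mpr ⟨hu1, huB⟩)) huz
        · -- v ∈ B.erase z
          obtain ⟨hvz, hvB⟩ := Finset.mem_erase.mp hv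
          refine (Finset.card_le_card ?_).trans (hd4 v hvB)
          intro u hu
          obtain ⟨hu1, hu2⟩ := Finset.mem_inter.mp hu
          refine Finset.mem_inter.mpr ⟨hu1, ?_⟩
          rcases Finset.mem_insert.mp hu2 with rfl | hu2
          · -- u = y : impossible since y's unique B-neighbour is z
            have : v ∈ G.neighborFinset u ∩ B :=
              Finset.mem_inter.mpr ⟨(G.mem_neighborFinset u v).mpr
                ((G.mem_neighborFinset v u).mp hu1).symm, hvB⟩
            exact absurd (hyBz v this) hvz
          · exact (Finset.mem_erase.mp hu2).2
      have hacA' : (G.induce (↑A' : Set V)).IsAcyclic := by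
        have h1 := acyclic_induce_mono (Finset.erase_subset y A) hac3
        have h2 : (G.induce (↑(insert z (A.erase y)) : Set V)).IsAcyclic := by
          refine acyclic_insert h1 (hcard1 _ y fun u hu => ?_)
          obtain ⟨hu1, hu2⟩ := Finset.mem_inter.mp hu
          obtain ⟨huy, huA⟩ := Finset.mem_erase.mp hu2
          exact hzAy u (Finset.mem_inter.mpr ⟨hu1, huA⟩)
        rw [hA'def]
        refine acyclic_insert h2 (hcard1 _ z fun u hu => ?_)
        obtain ⟨hu1, hu2⟩ := Finset.mem_inter.mp hu
        rw [hNx] at hu1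
        rcases Finset.mem_insert.mp hu1 with rfl | hu1
        · -- u = y but y ∉ insert z (A.erase y)
          rcases Finset.mem_insert.mp hu2 with h | h
          · exact h
          · exact absurd (Finset.mem_erase.mp h).1 (not_not.mpr rfl)
        · exact Finset.mem_singleton.mp hu1
      have hacB' : (G.induce (↑(insert y (B.erase z)) : Set V)).IsAcyclic := by
        have h1 := acyclic_induce_mono (Finset.erase_subset z B) hac4
        refine acyclic_insert h1 (hcard1 _ z fun u hu => ?_)
        obtain ⟨hu1, hu2⟩ := Finset.mem_inter.mp hu
        obtain ⟨huz, huB⟩ := Finset.mem_erase.mp hu2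
        exact hyBz u (Finset.mem_inter.mpr ⟨hu1, huB⟩)
      refine hnoG ⟨A', Finset.subset_univ _, hdeg3', hdeg4', hacA', ?_⟩
      rw [hcompl]
      exact hacB'
  · -- Case 4 : y ∉ A, z ∈ A.
    have hyB : y ∈ (Finset.univ \ ({x} : Finset V)) \ A := Finset.mem_sdiff.mpr ⟨hyS, hyA⟩
    by_cases h4 : (G.neighborFinset y ∩ ((Finset.univ \ ({x} : Finset V)) \ A)).card ≤ 3
    · refine hnoG ⟨A, extend_into_B hA ?_ ?_⟩
      · intro v hv hadj
        rcases hAdjx v hadj with rfl | rfl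
        · exact h4
        · exact absurd hzA (Finset.mem_sdiff.mp hv).2
      · refine hcard1 _ y fun u hu => ?_
        obtain ⟨hu1, hu2⟩ := Finset.mem_inter.mp hu
        have hu3 : u ∉ A := (Finset.mem_sdiff.mp hu2).2
        rw [hNx] at hu1
        rcases Finset.mem_insert.mp hu1 with rfl | hu1
        · rfl
        · rw [Finset.mem_singleton] at hu1; subst hu1; exact absurd hzA hu3
    · -- impossible : y would have degree at least 6
      push_neg at h4
      set B : Finset V := (Finset.univ \ ({x} : Finset V)) \ A with hBdef
      have hzB : z ∉ B := fun h => (Finset.mem_sdiff.mp h).2 hzA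
      have hsubU : insert x (insert z (G.neighborFinset y ∩ B)) ⊆ G.neighborFinset y := by
        intro u hu
        rcases Finset.mem_insert.mp hu with rfl | hu
        · exact (G.mem_neighborFinset y u).mpr hxy.symm
        rcases Finset.mem_insert.mp hu with rfl | hu
        · exact (G.mem_neighborFinset y u).mpr hyz
        · exact (Finset.mem_inter.mp hu).1
      have hz2 : z ∉ G.neighborFinset y ∩ B := fun h => hzB (Finset.mem_inter.mp h).2
      have hx2 : x ∉ insert z (G.neighborFinset y ∩ B) := by
        rw [Finset.mem_insert]
        rintro (rfl | h)
        · exact hzx' rfl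
        · exact hxB (Finset.mem_inter.mp h).2
      have hcard := Finset.card_le_card hsubU
      rw [Finset.card_insert_of_notMem hx2, Finset.card_insert_of_notMem hz2,
        G.card_neighborFinset_eq_degree, hdy] at hcard
      omega
  · -- Case 2 : y, z ∉ A.  Put x on the A₃ side.
    refine hnoG ⟨_, extend_into_A hA ?_ ?_⟩
    · intro v hv hadj
      rcases hAdjx v hadj with rfl | rfl
      · exact absurd hv hyA
      · exact absurd hv hzA
    · refine hcard1 _ y fun u hu => ?_
      obtain ⟨hu1, hu2⟩ := Finset.mem_inter.mp hu
      rw [hNx] at hu1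
      rcases Finset.mem_insert.mp hu1 with rfl | hu1
      · exact absurd hu2 hyA
      · rw [Finset.mem_singleton] at hu1; subst hu1; exact absurd hu2 hzA
end

section
/- In a vertex-minimal graph G with no (F_3,F_4)-partition that has no 4-cycles, there is no 5-vertex v with five pendent 3-faces (each neighbor x_j of v is a 3-vertex lying on a triangle x_j y_j z_j not containing v) such that at least four of these triangles have both other vertices of degree at most 5. -/
open SimpleGraph Finset
set_option linter.unusedSectionVars false


namespace NoFFAux
variable {V : Type*} {G : SimpleGraph V}


lemma exists_lift {s : Set V} :
    ∀ {a b : V} (p : G.Walk a b), (∀ x ∈ p.support, x ∈ s) → ∀ (ha : a ∈ s) (hb : b ∈ s),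
      ∃ q : (G.induce s).Walk ⟨a, ha⟩ ⟨b, hb⟩,
        q.map (SimpleGraph.Embedding.induce s).toHom = p := by
  intro a b p
  induction p with
  | nil => intro _ ha hb; exact ⟨.nil, rfl⟩
  | @cons a c b h p ih =>
      intro hsup ha hb
      have hc : c ∈ s := hsup c (by simp)
      obtain ⟨q, hq⟩ := ih (fun x hx => hsup x (by simp [hx])) hc hb
      exact ⟨.cons (by simpa using h) q, by simp [hq]⟩

lemma induce_acyclic_iff (s : Set V) :
    (G.induce s).IsAcyclic ↔
      ∀ (w : V) (c : G.Walk w w), c.IsCycle → ¬ (∀ x ∈ c.support, x ∈ s) := by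
  constructor
  · intro hac w c hc hsup
    have ha : w ∈ s := hsup w c.start_mem_support
    obtain ⟨q, hq⟩ := exists_lift (G := G) c hsup ha ha
    have : q.IsCycle := by
      refine (SimpleGraph.Walk.map_isCycle_iff_of_injective ?_).mp (by rw [hq]; exact hc)
      exact Subtype.val_injective
    exact hac q this
  · intro h a c hc
    have hmap : (c.map (SimpleGraph.Embedding.induce s).toHom).IsCycle := by
      refine (SimpleGraph.Walk.map_isCycle_iff_of_injective ?_).mpr hc
      exact Subtype.val_injective
    refine h _ _ hmap ?_
    intro x hx
    rw [SimpleGraph.Walk.support_map] at hx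
    obtain ⟨y, _, rfl⟩ := List.mem_map.mp hx
    exact y.2


lemma exists_cons {u v : V} (p : G.Walk u v) (hp : 0 < p.length) :
    ∃ (w : V) (h : G.Adj u w) (r : G.Walk w v), p = SimpleGraph.Walk.cons h r := by
  cases p with
  | nil => simp at hp
  | cons h r => exact ⟨_, h, r, rfl⟩

/-- From a cycle through `v` (all of whose vertices lie in `insert v T`, with `T`
inducing an acyclic graph), extract two distinct neighbors of `v` in `T`, each of
which has a neighbor in `T`. -/
lemma exists_pair_of_cycle [DecidableEq V] {T : Finset V} {v : V} (hv : v ∉ T)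
    (hT : ∀ (w' : V) (c' : G.Walk w' w'), c'.IsCycle → ¬ (∀ x ∈ c'.support, x ∈ T))
    {w : V} (c : G.Walk w w) (hc : c.IsCycle)
    (hsup : ∀ x ∈ c.support, x ∈ insert v T) :
    ∃ p q : V, p ∈ T ∧ q ∈ T ∧ p ≠ q ∧ G.Adj v p ∧ G.Adj v q ∧
        (∃ r ∈ T, G.Adj p r) ∧ (∃ r ∈ T, G.Adj q r) := by
  by_cases hvs : v ∈ c.support
  · -- rotate the cycle at `v`
    have key : ∀ (c' : G.Walk v v), c'.IsCycle → (∀ x ∈ c'.support, x ∈ insert v T) →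
        ∃ p q : V, p ∈ T ∧ q ∈ T ∧ p ≠ q ∧ G.Adj v p ∧ G.Adj v q ∧
          (∃ r ∈ T, G.Adj p r) ∧ (∃ r ∈ T, G.Adj q r) := by
      intro c' hc' hsup'
      have hlen3 : 3 ≤ c'.length := hc'.three_le_length
      obtain ⟨u, h, p, rfl⟩ := exists_cons c' (by omega)
      have hplen : 2 ≤ p.length := by
        have : (SimpleGraph.Walk.cons h p).length = p.length + 1 := by simp
        omega
      have hmemp : ∀ x ∈ p.support, x ∈ insert v T := fun x hx =>
        hsup' x (by simp [hx])
      obtain ⟨hp, -⟩ := (SimpleGraph.Walk.cons_isCycle_iff p h).mp hc'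
      -- u side
      have huT : u ∈ T := by
        have := hmemp u p.start_mem_support
        rcases Finset.mem_insert.mp this with h' | h'
        · exact absurd h'.symm h.ne
        · exact h'
      obtain ⟨u2, h2, r, rfl⟩ := exists_cons p (by omega)
      have hu2v : u2 ≠ v := by
        rintro rfl
        have : r.IsPath := hp.of_cons
        rw [SimpleGraph.Walk.isPath_iff_eq_nil] at this
        subst this
        simp at hplen
      have hu2T : u2 ∈ T := by
        have := hmemp u2 (by simp)
        rcases Finset.mem_insert.mp this with h' | h'
        · exact absurd h' hu2v
        · exact h'
      -- reverse side
      set pr := (SimpleGraph.Walk.cons h2 r).reverse with hprdef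
      have hprlen : 2 ≤ pr.length := by
        rw [hprdef, SimpleGraph.Walk.length_reverse]; exact hplen
      have hprpath : pr.IsPath := hp.reverse
      obtain ⟨w1, h3, q, hpr_eq⟩ := exists_cons pr (by omega)
      have hw1v : w1 ≠ v := h3.ne'
      have hw1mem : w1 ∈ (SimpleGraph.Walk.cons h2 r).support := by
        have : w1 ∈ pr.support := by rw [hpr_eq]; simp
        rwa [hprdef, SimpleGraph.Walk.support_reverse, List.mem_reverse] at this
      have hw1T : w1 ∈ T := by
        have := hmemp w1 hw1mem
        rcases Finset.mem_insert.mp this with h' | h'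
        · exact absurd h' hw1v
        · exact h'
      have hw1u : w1 ≠ u := by
        rintro rfl
        have hq : q.IsPath := by
          have : (SimpleGraph.Walk.cons h3 q).IsPath := hpr_eq ▸ hprpath
          exact this.of_cons
        rw [SimpleGraph.Walk.isPath_iff_eq_nil] at hq
        subst hq
        have : pr.length = 1 := by rw [hpr_eq]; simp
        omega
      obtain ⟨w2, h4, t, hq_eq⟩ := exists_cons q (by
        have : pr.length = q.length + 1 := by rw [hpr_eq]; simp
        omega)
      have hw2v : w2 ≠ v := by
        have hconspath : (SimpleGraph.Walk.cons h3 q).IsPath := hpr_eq ▸ hprpath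
        have hvq : v ∉ q.support := ((SimpleGraph.Walk.cons_isPath_iff _ _).mp hconspath).2
        rintro rfl
        exact hvq (by rw [hq_eq]; simp)
      have hw2T : w2 ∈ T := by
        have hw2pr : w2 ∈ pr.support := by
          rw [hpr_eq]
          have : w2 ∈ q.support := by rw [hq_eq]; simp
          simp [this]
        have hw2p : w2 ∈ (SimpleGraph.Walk.cons h2 r).support := by
          rwa [hprdef, SimpleGraph.Walk.support_reverse, List.mem_reverse] at hw2pr
        have := hmemp w2 hw2p
        rcases Finset.mem_insert.mp this with h' | h'
        · exact absurd h' hw2v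
        · exact h'
      exact ⟨u, w1, huT, hw1T, fun hh => hw1u hh.symm, h, h3,
        ⟨u2, hu2T, h2⟩, ⟨w2, hw2T, h4⟩⟩
    have hc2 := hc.rotate hvs
    refine key (c.rotate v hvs) hc2 ?_
    intro x hx
    rcases eq_or_ne x v with rfl | hxv
    · exact Finset.mem_insert_self _ _
    · -- x is in the tail of the rotated support, which is a rotation of c's tail
      have hxc : x ∈ c.support := by
        have hsupp := SimpleGraph.Walk.support_rotate c v hvs
        rw [SimpleGraph.Walk.support_eq_cons (c.rotate v hvs)] at hx
        rcases List.mem_cons.mp hx with h' | h'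
        · exact absurd h' hxv
        · exact List.mem_of_mem_tail (hsupp.perm.mem_iff.mp h')
      exact hsup x hxc
  · exfalso
    refine hT w c hc ?_
    intro x hx
    rcases Finset.mem_insert.mp (hsup x hx) with h' | h'
    · exact absurd (h' ▸ hx) hvs
    · exact h'

section
variable [DecidableEq V]

lemma induce_acyclic_iff' (T : Finset V) :
    (G.induce (↑T : Set V)).IsAcyclic ↔
      ∀ (w : V) (c : G.Walk w w), c.IsCycle → ¬ (∀ x ∈ c.support, x ∈ T) := by
  rw [induce_acyclic_iff]
  simp only [Finset.mem_coe]

lemma acyclic_mono {T₁ T₂ : Finset V} (h : T₁ ⊆ T₂)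
    (hac : (G.induce (↑T₂ : Set V)).IsAcyclic) : (G.induce (↑T₁ : Set V)).IsAcyclic := by
  rw [induce_acyclic_iff'] at hac ⊢
  intro w c hc hsup
  exact hac w c hc fun x hx => h (hsup x hx)

lemma pair_lemma {T : Finset V} {v : V} (hv : v ∉ T)
    (hT : (G.induce (↑T : Set V)).IsAcyclic)
    (hni : ¬ (G.induce (↑(insert v T) : Set V)).IsAcyclic) :
    ∃ p q : V, p ∈ T ∧ q ∈ T ∧ p ≠ q ∧ G.Adj v p ∧ G.Adj v q ∧
      (∃ r ∈ T, G.Adj p r) ∧ (∃ r ∈ T, G.Adj q r) := by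
  rw [induce_acyclic_iff'] at hni
  push_neg at hni
  obtain ⟨w, c, hc, hsup⟩ := hni
  rw [induce_acyclic_iff'] at hT
  refine exists_pair_of_cycle hv hT c hc ?_
  intro x hx
  simpa using hsup x hx

lemma insert_acyclic [Fintype V] [DecidableRel G.Adj] {T : Finset V} {v : V} (hv : v ∉ T)
    (hT : (G.induce (↑T : Set V)).IsAcyclic)
    (hcard : (G.neighborFinset v ∩ T).card ≤ 1) :
    (G.induce (↑(insert v T) : Set V)).IsAcyclic := by
  by_contra hni
  obtain ⟨p, q, hpT, hqT, hpq, hvp, hvq, -, -⟩ := pair_lemma hv hT hni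
  have hsub : ({p, q} : Finset V) ⊆ G.neighborFinset v ∩ T := by
    intro x hx
    rcases Finset.mem_insert.mp hx with rfl | hx
    · exact Finset.mem_inter.mpr ⟨by simpa using hvp, hpT⟩
    · rw [Finset.mem_singleton] at hx; subst hx
      exact Finset.mem_inter.mpr ⟨by simpa using hvq, hqT⟩
  have := Finset.card_le_card hsub
  rw [Finset.card_pair hpq] at this
  omega

lemma triangle_not_acyclic {T : Finset V} {a b c : V} (ha : a ∈ T) (hb : b ∈ T) (hc : c ∈ T)
    (hab : G.Adj a b) (hbc : G.Adj b c) (hac : G.Adj a c) :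
    ¬ (G.induce (↑T : Set V)).IsAcyclic := by
  intro hacy
  rw [induce_acyclic_iff'] at hacy
  have hw : (SimpleGraph.Walk.cons hab (.cons hbc (.cons hac.symm .nil))).IsCycle := by
    simp [SimpleGraph.Walk.cons_isCycle_iff, SimpleGraph.Walk.cons_isPath_iff,
      Sym2.eq_iff, hab.ne, hab.ne', hbc.ne, hbc.ne', hac.ne, hac.ne']
  refine hacy a _ hw ?_
  intro x hx
  have hx' : x = a ∨ x = b ∨ x = c := by
    simp [SimpleGraph.Walk.support_cons] at hx
    tauto
  rcases hx' with rfl | rfl | rfl <;> assumption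

lemma four_cycle_exists {a b c d : V} (hab : G.Adj a b) (hbc : G.Adj b c) (hcd : G.Adj c d)
    (hda : G.Adj d a) (hacne : a ≠ c) (hbd : b ≠ d) :
    ∃ w : G.Walk a a, w.IsCycle ∧ w.length = 4 := by
  refine ⟨.cons hab (.cons hbc (.cons hcd (.cons hda .nil))), ?_, by simp⟩
  simp [SimpleGraph.Walk.cons_isCycle_iff, SimpleGraph.Walk.cons_isPath_iff,
    Sym2.eq_iff, hab.ne, hab.ne', hbc.ne, hbc.ne', hcd.ne, hcd.ne', hda.ne, hda.ne',
    hacne, hacne.symm, hbd, hbd.symm]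

end

end NoFFAux

open NoFFAux in
set_option maxHeartbeats 4000000 in
/-- In a vertex-minimal graph with no `(𝓕₃,𝓕₄)`-partition and no 4-cycles, there is
no 5-vertex `v` with five pendent 3-faces (each neighbor of `v` is a 3-vertex lying
on a triangle not containing `v`) such that at least four of these pendent triangles
are `(3,5⁻,5⁻)`-faces. -/
theorem no_five_vertex_with_five_pendent_faces {V : Type*} [Fintype V] [DecidableEq V]
    (G : SimpleGraph V) [DecidableRel G.Adj]
    (h4 : ∀ (w : V) (c : G.Walk w w), c.IsCycle → c.length ≠ 4)
    (hmin : MinimalNoFF G) :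
    ¬ ∃ v : V, G.degree v = 5 ∧
      (∀ x : V, G.Adj v x → G.degree x = 3 ∧
        ∃ y z : V, y ≠ v ∧ z ≠ v ∧ G.Adj x y ∧ G.Adj x z ∧ G.Adj y z) ∧
      (∃ B ⊆ G.neighborFinset v, 4 ≤ B.card ∧
        ∀ x ∈ B, ∃ y z : V, y ≠ v ∧ z ≠ v ∧ G.Adj x y ∧ G.Adj x z ∧ G.Adj y z ∧
          G.degree y ≤ 5 ∧ G.degree z ≤ 5) := by
  have hnone := hmin.1
  have hall := hmin.2

  rintro ⟨v, hdeg, hfaces, B, hBsub, hBcard, hBspec⟩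
  obtain ⟨A, hA⟩ := hall v
  set S : Finset V := Finset.univ \ ({v} : Finset V) with hSdef
  obtain ⟨hAS, hA3, hC4, hAac, hCac⟩ := hA
  have hmemS : ∀ x : V, x ∈ S ↔ x ≠ v := by intro x; rw [hSdef]; simp
  have hvS : v ∉ S := by rw [hmemS]; simp
  have hvA : v ∉ A := fun h => hvS (hAS h)
  have hmN : ∀ a b : V, a ∈ G.neighborFinset b ↔ G.Adj b a := fun a b => by simp
  have hvC : v ∉ S \ A := fun h => hvS (Finset.mem_sdiff.mp h).1
  have hadjS : ∀ x : V, G.Adj v x → x ∈ S := fun x h => (hmemS x).mpr h.ne'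
  have deg3 : ∀ x : V, G.Adj v x → G.degree x = 3 := fun x h => (hfaces x h).1
  have hNvcard : (G.neighborFinset v).card = 5 := by
    rw [G.card_neighborFinset_eq_degree]; exact hdeg
  have hsum : (G.neighborFinset v ∩ A).card + (G.neighborFinset v ∩ (S \ A)).card = 5 := by
    have hCeq : G.neighborFinset v ∩ (S \ A) = G.neighborFinset v \ A := by
      ext w
      simp only [Finset.mem_inter, Finset.mem_sdiff]
      constructor
      · rintro ⟨h1, _, h3⟩; exact ⟨h1, h3⟩
      · rintro ⟨h1, h2⟩
        exact ⟨h1, hadjS w ((hmN _ _).mp h1), h2⟩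
    rw [hCeq, Finset.card_inter_add_card_sdiff, hNvcard]
  have hsmall : ∀ (u : V) (P : Finset V), G.Adj v u → v ∉ P →
      (G.neighborFinset u ∩ P).card ≤ 2 := by
    intro u P hu hvP
    have hvmem : v ∈ G.neighborFinset u := (hmN _ _).mpr hu.symm
    have hsub : G.neighborFinset u ∩ P ⊆ (G.neighborFinset u).erase v := by
      intro x hx
      obtain ⟨hx1, hx2⟩ := Finset.mem_inter.mp hx
      exact Finset.mem_erase.mpr ⟨fun h => hvP (h ▸ hx2), hx1⟩
    have h1 := Finset.card_le_card hsub
    rw [Finset.card_erase_of_mem hvmem, G.card_neighborFinset_eq_degree, deg3 u hu] at h1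
    omega
  -- adding v to the A-side of a partition A' of G - v
  have haddA' : ∀ A' : Finset V, FFPartOn G S A' → (G.neighborFinset v ∩ A').card ≤ 3 →
      (G.induce (↑(insert v A') : Set V)).IsAcyclic → False := by
    rintro A' ⟨h1, h2, h3, _, h5⟩ hcard hac
    have hvA' : v ∉ A' := fun h => hvS (h1 h)
    have hset : Finset.univ \ insert v A' = S \ A' := by
      ext x
      simp only [Finset.mem_sdiff, Finset.mem_univ, true_and, Finset.mem_insert, hSdef,
        Finset.mem_singleton]
      tauto
    refine hnone ⟨insert v A', fun x _ => Finset.mem_univ x, ?_, ?_, hac, ?_⟩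
    · intro u hu
      rcases Finset.mem_insert.mp hu with rfl | huA
      · have heq : G.neighborFinset u ∩ insert u A' = G.neighborFinset u ∩ A' := by
          ext x
          simp only [Finset.mem_inter, Finset.mem_insert]
          constructor
          · rintro ⟨hx, rfl | hxA⟩
            · exact absurd hx (by simp)
            · exact ⟨hx, hxA⟩
          · rintro ⟨hx, hxA⟩; exact ⟨hx, Or.inr hxA⟩
        rw [heq]; exact hcard
      · by_cases hadj : G.Adj v u
        · have hsub : G.neighborFinset u ∩ insert v A' ⊆ insert v (G.neighborFinset u ∩ A') := by
            intro x hx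
            obtain ⟨hxN, hxI⟩ := Finset.mem_inter.mp hx
            rcases Finset.mem_insert.mp hxI with rfl | hxA
            · exact Finset.mem_insert_self _ _
            · exact Finset.mem_insert_of_mem (Finset.mem_inter.mpr ⟨hxN, hxA⟩)
          have hc1 := Finset.card_le_card hsub
          have hc2 := Finset.card_insert_le v (G.neighborFinset u ∩ A')
          have hc3 := hsmall u A' hadj hvA'
          omega
        · have hsub : G.neighborFinset u ∩ insert v A' ⊆ G.neighborFinset u ∩ A' := by
            intro x hx
            obtain ⟨hxN, hxI⟩ := Finset.mem_inter.mp hx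
            rcases Finset.mem_insert.mp hxI with rfl | hxA
            · exact absurd ((hmN _ _).mp hxN).symm hadj
            · exact Finset.mem_inter.mpr ⟨hxN, hxA⟩
          exact le_trans (Finset.card_le_card hsub) (h2 u huA)
    · intro u hu
      rw [hset] at hu ⊢
      exact h3 u hu
    · rw [hset]; exact h5
  -- adding v to the C-side of a partition A' of G - v
  have haddC' : ∀ A' : Finset V, FFPartOn G S A' →
      (G.neighborFinset v ∩ (S \ A')).card ≤ 4 →
      (G.induce (↑(insert v (S \ A')) : Set V)).IsAcyclic → False := by
    rintro A' ⟨h1, h2, h3, h4', h5⟩ hcard hac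
    have hvA' : v ∉ A' := fun h => hvS (h1 h)
    have hvC' : v ∉ S \ A' := fun h => hvS (Finset.mem_sdiff.mp h).1
    have hset : Finset.univ \ A' = insert v (S \ A') := by
      ext x
      by_cases hxv : x = v
      · subst hxv; simp [hvA', hSdef]
      · simp [hSdef, hxv]
    refine hnone ⟨A', fun x _ => Finset.mem_univ x, h2, ?_, h4', ?_⟩
    · intro u hu
      rw [hset] at hu ⊢
      rcases Finset.mem_insert.mp hu with rfl | huC
      · have heq : G.neighborFinset u ∩ insert u (S \ A') = G.neighborFinset u ∩ (S \ A') := by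
          ext x
          simp only [Finset.mem_inter, Finset.mem_insert]
          constructor
          · rintro ⟨hx, rfl | hxA⟩
            · exact absurd hx (by simp)
            · exact ⟨hx, hxA⟩
          · rintro ⟨hx, hxA⟩; exact ⟨hx, Or.inr hxA⟩
        rw [heq]; exact hcard
      · by_cases hadj : G.Adj v u
        · have hsub : G.neighborFinset u ∩ insert v (S \ A') ⊆
              insert v (G.neighborFinset u ∩ (S \ A')) := by
            intro x hx
            obtain ⟨hxN, hxI⟩ := Finset.mem_inter.mp hx
            rcases Finset.mem_insert.mp hxI with rfl | hxA
            · exact Finset.mem_insert_self _ _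
            · exact Finset.mem_insert_of_mem (Finset.mem_inter.mpr ⟨hxN, hxA⟩)
          have hc1 := Finset.card_le_card hsub
          have hc2 := Finset.card_insert_le v (G.neighborFinset u ∩ (S \ A'))
          have hc3 := hsmall u (S \ A') hadj hvC'
          omega
        · have hsub : G.neighborFinset u ∩ insert v (S \ A') ⊆
              G.neighborFinset u ∩ (S \ A') := by
            intro x hx
            obtain ⟨hxN, hxI⟩ := Finset.mem_inter.mp hx
            rcases Finset.mem_insert.mp hxI with rfl | hxA
            · exact absurd ((hmN _ _).mp hxN).symm hadj
            · exact Finset.mem_inter.mpr ⟨hxN, hxA⟩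
          exact le_trans (Finset.card_le_card hsub) (h3 u huC)
    · rw [hset]; exact hac
  have haddA : ∀ A' : Finset V, FFPartOn G S A' → (G.neighborFinset v ∩ A').card ≤ 1 → False := by
    intro A' hp hc
    exact haddA' A' hp (by omega)
      (insert_acyclic (fun h => hvS (hp.1 h)) hp.2.2.2.1 hc)
  have haddC : ∀ A' : Finset V, FFPartOn G S A' →
      (G.neighborFinset v ∩ (S \ A')).card ≤ 1 → False := by
    intro A' hp hc
    exact haddC' A' hp (by omega)
      (insert_acyclic (fun h => hvS (Finset.mem_sdiff.mp h).1) hp.2.2.2.2 hc)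
  have hBor : ∀ x1 x2 : V, G.Adj v x1 → G.Adj v x2 → x1 ≠ x2 → x1 ∉ B → x2 ∉ B → False := by
    intro x1 x2 h1 h2 hne hb1 hb2
    have hsub : B ⊆ (G.neighborFinset v) \ {x1, x2} := by
      intro w hw
      refine Finset.mem_sdiff.mpr ⟨hBsub hw, ?_⟩
      simp only [Finset.mem_insert, Finset.mem_singleton]
      push_neg
      exact ⟨fun h => hb1 (h ▸ hw), fun h => hb2 (h ▸ hw)⟩
    have hps : ({x1, x2} : Finset V) ⊆ G.neighborFinset v := by
      intro w hw
      simp only [Finset.mem_insert, Finset.mem_singleton] at hw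
      rcases hw with rfl | rfl
      · exact (hmN _ _).mpr h1
      · exact (hmN _ _).mpr h2
    have hc := Finset.card_le_card hsub
    rw [Finset.card_sdiff_of_subset hps, Finset.card_pair hne, hNvcard] at hc
    omega
  have hNeq : ∀ x1 y z : V, G.Adj v x1 → y ≠ v → z ≠ v → G.Adj x1 y → G.Adj x1 z → y ≠ z →
      G.neighborFinset x1 = {v, y, z} := by
    intro x1 y z hvx1 hyv hzv hxy hxz hyzne
    have hsub : ({v, y, z} : Finset V) ⊆ G.neighborFinset x1 := by
      intro w hw
      simp only [Finset.mem_insert, Finset.mem_singleton] at hw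
      rcases hw with rfl | rfl | rfl
      · exact (hmN _ _).mpr hvx1.symm
      · exact (hmN _ _).mpr hxy
      · exact (hmN _ _).mpr hxz
    refine (Finset.eq_of_subset_of_card_le hsub ?_).symm
    have hc3 : ({v, y, z} : Finset V).card = 3 := by
      rw [Finset.card_insert_of_notMem (by simp [Ne.symm hyv, Ne.symm hzv]),
        Finset.card_pair hyzne]
    rw [G.card_neighborFinset_eq_degree, deg3 x1 hvx1, hc3]
  by_cases hA1 : (G.neighborFinset v ∩ A).card ≤ 1
  · exact haddA A ⟨hAS, hA3, hC4, hAac, hCac⟩ hA1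
  by_cases hC1 : (G.neighborFinset v ∩ (S \ A)).card ≤ 1
  · exact haddC A ⟨hAS, hA3, hC4, hAac, hCac⟩ hC1
  push_neg at hA1 hC1
  have hAor : (G.neighborFinset v ∩ A).card = 2 ∨ (G.neighborFinset v ∩ A).card = 3 := by omega
  rcases hAor with h2A | h3A
  · -- Case |N(v) ∩ A| = 2
    have hfailA : ¬ (G.induce (↑(insert v A) : Set V)).IsAcyclic := fun hac =>
      haddA' A ⟨hAS, hA3, hC4, hAac, hCac⟩ (by omega) hac
    obtain ⟨x1, x2, hx1A, hx2A, hx12, hvx1, hvx2, hr1, hr2⟩ := pair_lemma hvA hAac hfailA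
    have hNAeq : G.neighborFinset v ∩ A = {x1, x2} := by
      refine (Finset.eq_of_subset_of_card_le ?_ ?_).symm
      · intro w hw
        simp only [Finset.mem_insert, Finset.mem_singleton] at hw
        rcases hw with rfl | rfl
        · exact Finset.mem_inter.mpr ⟨(hmN _ _).mpr hvx1, hx1A⟩
        · exact Finset.mem_inter.mpr ⟨(hmN _ _).mpr hvx2, hx2A⟩
      · rw [Finset.card_pair hx12, h2A]
    have inner2 : ∀ x1 x2 : V, G.Adj v x1 → G.Adj v x2 → x1 ≠ x2 →
        G.neighborFinset v ∩ A = {x1, x2} → x1 ∈ B → (∃ r ∈ A, G.Adj x1 r) → False := by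
      clear hNAeq hx12 hvx1 hvx2 hx1A hx2A hr1 hr2
      intro x1 x2 hvx1 hvx2 hne hNAeq hx1B hr
      obtain ⟨r, hrA, hx1r⟩ := hr
      obtain ⟨y, z, hyv, hzv, hxy, hxz, hyz, hdy, hdz⟩ := hBspec x1 hx1B
      have hx1A : x1 ∈ A := by
        have hmem : x1 ∈ G.neighborFinset v ∩ A := by
          rw [hNAeq]; exact Finset.mem_insert_self _ _
        exact (Finset.mem_inter.mp hmem).2
      have hx1S : x1 ∈ S := hAS hx1A
      have hNx1 : G.neighborFinset x1 = {v, y, z} := hNeq x1 y z hvx1 hyv hzv hxy hxz hyz.ne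
      have hyzA : y ∈ A ∨ z ∈ A := by
        have hrN : r ∈ G.neighborFinset x1 := (hmN _ _).mpr hx1r
        rw [hNx1] at hrN
        simp only [Finset.mem_insert, Finset.mem_singleton] at hrN
        rcases hrN with rfl | rfl | rfl
        · exact absurd hrA hvA
        · exact Or.inl hrA
        · exact Or.inr hrA
      have hnotboth : ¬ (y ∈ A ∧ z ∈ A) := fun hb =>
        triangle_not_acyclic hx1A hb.1 hb.2 hxy hyz hxz hAac
      have core : ∀ y' z' : V, y' ≠ v → z' ≠ v → G.Adj x1 y' → G.Adj x1 z' → G.Adj y' z' →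
          G.degree y' ≤ 5 → G.neighborFinset x1 = {v, y', z'} → z' ∈ A → y' ∉ A → False := by
        intro y' z' hy'v hz'v hxy' hxz' hy'z' hdy' hNx1' hz'A hy'A
        have hx1z' : x1 ≠ z' := hxz'.ne
        have hsetC : S \ (A.erase x1) = insert x1 (S \ A) := by
          ext x
          by_cases hxx : x = x1
          · subst hxx; simp [hx1S, hx1A]
          · simp [hxx, Finset.mem_sdiff, Finset.mem_erase]
        have hNx1capC : G.neighborFinset x1 ∩ (S \ A) ⊆ {y'} := by
          intro w hw
          obtain ⟨hwN, hwC⟩ := Finset.mem_inter.mp hw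
          rw [hNx1'] at hwN
          simp only [Finset.mem_insert, Finset.mem_singleton] at hwN
          rcases hwN with rfl | rfl | rfl
          · exact absurd hwC hvC
          · exact Finset.mem_singleton_self _
          · exact absurd hz'A (Finset.mem_sdiff.mp hwC).2
        have hpart : FFPartOn G S (A.erase x1) := by
          refine ⟨fun x hx => hAS (Finset.erase_subset _ _ hx), ?_, ?_,
            acyclic_mono (Finset.erase_subset _ _) hAac, ?_⟩
          · intro u hu
            exact le_trans (Finset.card_le_card (Finset.inter_subset_inter
              (Finset.Subset.refl _) (Finset.erase_subset _ _)))
              (hA3 u (Finset.erase_subset _ _ hu))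
          · intro u hu
            rw [hsetC] at hu ⊢
            rcases Finset.mem_insert.mp hu with hux | huC
            · rw [hux]
              have hsub : G.neighborFinset x1 ∩ insert x1 (S \ A) ⊆ {y'} := by
                intro w hw
                obtain ⟨hwN, hwI⟩ := Finset.mem_inter.mp hw
                rw [hNx1'] at hwN
                simp only [Finset.mem_insert, Finset.mem_singleton] at hwN
                rcases hwN with rfl | rfl | rfl
                · rcases Finset.mem_insert.mp hwI with h' | h'
                  · exact absurd h' hvx1.ne
                  · exact absurd h' hvC
                · exact Finset.mem_singleton_self _
                · rcases Finset.mem_insert.mp hwI with h' | h'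
                  · exact absurd h' (Ne.symm hx1z')
                  · exact absurd hz'A (Finset.mem_sdiff.mp h').2
              exact le_trans (Finset.card_le_card hsub) (by simp)
            · by_cases huy : u = y'
              · rw [huy]
                have hsub : G.neighborFinset y' ∩ insert x1 (S \ A) ⊆
                    insert x1 (G.neighborFinset y' ∩ (S \ A)) := by
                  intro w hw
                  obtain ⟨hwN, hwI⟩ := Finset.mem_inter.mp hw
                  rcases Finset.mem_insert.mp hwI with rfl | hwC
                  · exact Finset.mem_insert_self _ _
                  · exact Finset.mem_insert_of_mem (Finset.mem_inter.mpr ⟨hwN, hwC⟩)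
                have hsub2 : G.neighborFinset y' ∩ (S \ A) ⊆
                    G.neighborFinset y' \ {x1, z'} := by
                  intro w hw
                  obtain ⟨hwN, hwC⟩ := Finset.mem_inter.mp hw
                  refine Finset.mem_sdiff.mpr ⟨hwN, ?_⟩
                  simp only [Finset.mem_insert, Finset.mem_singleton]
                  push_neg
                  have hwA := (Finset.mem_sdiff.mp hwC).2
                  exact ⟨fun h => hwA (h ▸ hx1A), fun h => hwA (h ▸ hz'A)⟩
                have hps : ({x1, z'} : Finset V) ⊆ G.neighborFinset y' := by
                  intro w hw
                  simp only [Finset.mem_insert, Finset.mem_singleton] at hw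
                  rcases hw with rfl | rfl
                  · exact (hmN _ _).mpr hxy'.symm
                  · exact (hmN _ _).mpr hy'z'
                have hd5 : (G.neighborFinset y').card ≤ 5 := by
                  rw [G.card_neighborFinset_eq_degree]; exact hdy'
                have hc1 := Finset.card_le_card hsub
                have hc2 := Finset.card_insert_le x1 (G.neighborFinset y' ∩ (S \ A))
                have hc3 := Finset.card_le_card hsub2
                have hc4' : (G.neighborFinset y' \ {x1, z'}).card =
                    (G.neighborFinset y').card - 2 := by
                  rw [Finset.card_sdiff_of_subset hps, Finset.card_pair hx1z']
                have hps2 := Finset.card_le_card hps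
                rw [Finset.card_pair hx1z'] at hps2
                omega
              · have hx1N : x1 ∉ G.neighborFinset u := by
                  intro hmem
                  have huN : u ∈ G.neighborFinset x1 :=
                    (hmN _ _).mpr ((hmN _ _).mp hmem).symm
                  rw [hNx1'] at huN
                  simp only [Finset.mem_insert, Finset.mem_singleton] at huN
                  rcases huN with rfl | rfl | rfl
                  · exact hvC huC
                  · exact huy rfl
                  · exact absurd hz'A (Finset.mem_sdiff.mp huC).2
                have hsub : G.neighborFinset u ∩ insert x1 (S \ A) ⊆
                    G.neighborFinset u ∩ (S \ A) := by
                  intro w hw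
                  obtain ⟨hwN, hwI⟩ := Finset.mem_inter.mp hw
                  rcases Finset.mem_insert.mp hwI with rfl | hwC
                  · exact absurd hwN hx1N
                  · exact Finset.mem_inter.mpr ⟨hwN, hwC⟩
                exact le_trans (Finset.card_le_card hsub) (hC4 u huC)
          · rw [hsetC]
            refine insert_acyclic (fun h => (Finset.mem_sdiff.mp h).2 hx1A) hCac ?_
            exact le_trans (Finset.card_le_card hNx1capC) (by simp)
        refine haddA (A.erase x1) hpart ?_
        have hsub : G.neighborFinset v ∩ A.erase x1 ⊆ {x2} := by
          intro w hw
          obtain ⟨hwN, hwA'⟩ := Finset.mem_inter.mp hw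
          obtain ⟨hwx1, hwA⟩ := Finset.mem_erase.mp hwA'
          have hw2 : w ∈ G.neighborFinset v ∩ A := Finset.mem_inter.mpr ⟨hwN, hwA⟩
          rw [hNAeq] at hw2
          simp only [Finset.mem_insert, Finset.mem_singleton] at hw2
          rcases hw2 with rfl | rfl
          · exact absurd rfl hwx1
          · exact Finset.mem_singleton_self _
        exact le_trans (Finset.card_le_card hsub) (by simp)
      by_cases hyA : y ∈ A
      · by_cases hzA : z ∈ A
        · exact hnotboth ⟨hyA, hzA⟩
        · exact core z y hzv hyv hxz hxy hyz.symm hdz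
            (by rw [hNx1, Finset.pair_comm y z]) hyA hzA
      · rcases hyzA with hyA' | hzA
        · exact absurd hyA' hyA
        · exact core y z hyv hzv hxy hxz hyz hdy hNx1 hzA hyA
    by_cases hx1B : x1 ∈ B
    · exact inner2 x1 x2 hvx1 hvx2 hx12 hNAeq hx1B hr1
    by_cases hx2B : x2 ∈ B
    · exact inner2 x2 x1 hvx2 hvx1 hx12.symm (by rw [hNAeq, Finset.pair_comm]) hx2B hr2
    · exact hBor x1 x2 hvx1 hvx2 hx12 hx1B hx2B
  · -- Case |N(v) ∩ A| = 3, so |N(v) ∩ (S \ A)| = 2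
    have hfailC : ¬ (G.induce (↑(insert v (S \ A)) : Set V)).IsAcyclic := fun hac =>
      haddC' A ⟨hAS, hA3, hC4, hAac, hCac⟩ (by omega) hac
    obtain ⟨x1, x2, hx1C, hx2C, hx12, hvx1, hvx2, hr1, hr2⟩ := pair_lemma hvC hCac hfailC
    have hNCeq : G.neighborFinset v ∩ (S \ A) = {x1, x2} := by
      refine (Finset.eq_of_subset_of_card_le ?_ ?_).symm
      · intro w hw
        simp only [Finset.mem_insert, Finset.mem_singleton] at hw
        rcases hw with rfl | rfl
        · exact Finset.mem_inter.mpr ⟨(hmN _ _).mpr hvx1, hx1C⟩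
        · exact Finset.mem_inter.mpr ⟨(hmN _ _).mpr hvx2, hx2C⟩
      · rw [Finset.card_pair hx12]; omega
    have inner3 : ∀ x1 x2 : V, G.Adj v x1 → G.Adj v x2 → x1 ≠ x2 →
        G.neighborFinset v ∩ (S \ A) = {x1, x2} → x1 ∈ B →
        (∃ r ∈ S \ A, G.Adj x1 r) → False := by
      clear hNCeq hx12 hvx1 hvx2 hx1C hx2C hr1 hr2
      intro x1 x2 hvx1 hvx2 hne hNCeq hx1B hr
      obtain ⟨r, hrC, hx1r⟩ := hr
      obtain ⟨y, z, hyv, hzv, hxy, hxz, hyz, hdy, hdz⟩ := hBspec x1 hx1B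
      have hx1C : x1 ∈ S \ A := by
        have hmem : x1 ∈ G.neighborFinset v ∩ (S \ A) := by
          rw [hNCeq]; exact Finset.mem_insert_self _ _
        exact (Finset.mem_inter.mp hmem).2
      have hx1S : x1 ∈ S := (Finset.mem_sdiff.mp hx1C).1
      have hx1nA : x1 ∉ A := (Finset.mem_sdiff.mp hx1C).2
      have hNx1 : G.neighborFinset x1 = {v, y, z} := hNeq x1 y z hvx1 hyv hzv hxy hxz hyz.ne
      have hyzC : y ∈ S \ A ∨ z ∈ S \ A := by
        have hrN : r ∈ G.neighborFinset x1 := (hmN _ _).mpr hx1r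
        rw [hNx1] at hrN
        simp only [Finset.mem_insert, Finset.mem_singleton] at hrN
        rcases hrN with rfl | rfl | rfl
        · exact absurd hrC hvC
        · exact Or.inl hrC
        · exact Or.inr hrC
      have hnotboth : ¬ (y ∈ S \ A ∧ z ∈ S \ A) := fun hb =>
        triangle_not_acyclic hx1C hb.1 hb.2 hxy hyz hxz hCac
      have core : ∀ y' z' : V, y' ≠ v → z' ≠ v → G.Adj x1 y' → G.Adj x1 z' → G.Adj y' z' →
          G.degree y' ≤ 5 → G.neighborFinset x1 = {v, y', z'} →
          z' ∈ S \ A → y' ∉ S \ A → False := by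
        intro y' z' hy'v hz'v hxy' hxz' hy'z' hdy' hNx1' hz'C hy'nC
        have hy'S : y' ∈ S := (hmemS y').mpr hy'v
        have hy'A : y' ∈ A := by
          by_contra hcon
          exact hy'nC (Finset.mem_sdiff.mpr ⟨hy'S, hcon⟩)
        have hz'nA : z' ∉ A := (Finset.mem_sdiff.mp hz'C).2
        have hx1z' : x1 ≠ z' := hxz'.ne
        have hx1y' : x1 ≠ y' := hxy'.ne
        by_cases hsat : (G.neighborFinset y' ∩ A).card ≤ 2
        · -- y' not A-saturated : move x1 into A
          have hNx1capA : G.neighborFinset x1 ∩ A ⊆ {y'} := by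
            intro w hw
            obtain ⟨hwN, hwA⟩ := Finset.mem_inter.mp hw
            rw [hNx1'] at hwN
            simp only [Finset.mem_insert, Finset.mem_singleton] at hwN
            rcases hwN with rfl | rfl | rfl
            · exact absurd hwA hvA
            · exact Finset.mem_singleton_self _
            · exact absurd hwA hz'nA
          have hCsub : S \ insert x1 A ⊆ S \ A :=
            Finset.sdiff_subset_sdiff (Finset.Subset.refl S) (Finset.subset_insert x1 A)
          have hpart : FFPartOn G S (insert x1 A) := by
            refine ⟨?_, ?_, ?_, ?_, acyclic_mono hCsub hCac⟩
            · intro x hx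
              rcases Finset.mem_insert.mp hx with rfl | hxA
              · exact hx1S
              · exact hAS hxA
            · intro u hu
              rcases Finset.mem_insert.mp hu with hux | huA
              · rw [hux]
                have hsub : G.neighborFinset x1 ∩ insert x1 A ⊆ {y'} := by
                  intro w hw
                  obtain ⟨hwN, hwI⟩ := Finset.mem_inter.mp hw
                  rw [hNx1'] at hwN
                  simp only [Finset.mem_insert, Finset.mem_singleton] at hwN
                  rcases hwN with rfl | rfl | rfl
                  · rcases Finset.mem_insert.mp hwI with h' | h'
                    · exact absurd h' hvx1.ne
                    · exact absurd h' hvA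
                  · exact Finset.mem_singleton_self _
                  · rcases Finset.mem_insert.mp hwI with h' | h'
                    · exact absurd h' (Ne.symm hx1z')
                    · exact absurd h' hz'nA
                exact le_trans (Finset.card_le_card hsub) (by simp)
              · by_cases huy : u = y'
                · rw [huy]
                  have hsub : G.neighborFinset y' ∩ insert x1 A ⊆
                      insert x1 (G.neighborFinset y' ∩ A) := by
                    intro w hw
                    obtain ⟨hwN, hwI⟩ := Finset.mem_inter.mp hw
                    rcases Finset.mem_insert.mp hwI with rfl | hwA
                    · exact Finset.mem_insert_self _ _
                    · exact Finset.mem_insert_of_mem (Finset.mem_inter.mpr ⟨hwN, hwA⟩)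
                  have hc1 := Finset.card_le_card hsub
                  have hc2 := Finset.card_insert_le x1 (G.neighborFinset y' ∩ A)
                  omega
                · have hx1N : x1 ∉ G.neighborFinset u := by
                    intro hmem
                    have huN : u ∈ G.neighborFinset x1 :=
                      (hmN _ _).mpr ((hmN _ _).mp hmem).symm
                    rw [hNx1'] at huN
                    simp only [Finset.mem_insert, Finset.mem_singleton] at huN
                    rcases huN with rfl | rfl | rfl
                    · exact hvA huA
                    · exact huy rfl
                    · exact hz'nA huA
                  have hsub : G.neighborFinset u ∩ insert x1 A ⊆
                      G.neighborFinset u ∩ A := by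
                    intro w hw
                    obtain ⟨hwN, hwI⟩ := Finset.mem_inter.mp hw
                    rcases Finset.mem_insert.mp hwI with rfl | hwA
                    · exact absurd hwN hx1N
                    · exact Finset.mem_inter.mpr ⟨hwN, hwA⟩
                  exact le_trans (Finset.card_le_card hsub) (hA3 u huA)
            · intro u hu
              exact le_trans (Finset.card_le_card (Finset.inter_subset_inter
                (Finset.Subset.refl _) hCsub)) (hC4 u (hCsub hu))
            · exact insert_acyclic hx1nA hAac
                (le_trans (Finset.card_le_card hNx1capA) (by simp))
          refine haddC (insert x1 A) hpart ?_
          have hsub : G.neighborFinset v ∩ (S \ insert x1 A) ⊆ {x2} := by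
            intro w hw
            obtain ⟨hwN, hwI⟩ := Finset.mem_inter.mp hw
            obtain ⟨hwS, hwnI⟩ := Finset.mem_sdiff.mp hwI
            have hwx1 : w ≠ x1 := fun h => hwnI (h ▸ Finset.mem_insert_self _ _)
            have hwnA : w ∉ A := fun h => hwnI (Finset.mem_insert_of_mem h)
            have hw2 : w ∈ G.neighborFinset v ∩ (S \ A) :=
              Finset.mem_inter.mpr ⟨hwN, Finset.mem_sdiff.mpr ⟨hwS, hwnA⟩⟩
            rw [hNCeq] at hw2
            simp only [Finset.mem_insert, Finset.mem_singleton] at hw2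
            rcases hw2 with rfl | rfl
            · exact absurd rfl hwx1
            · exact Finset.mem_singleton_self _
          exact le_trans (Finset.card_le_card hsub) (by simp)
        · -- y' is A-saturated : swap x1 and y'
          have hsat3 : (G.neighborFinset y' ∩ A).card = 3 := by
            have := hA3 y' hy'A
            omega
          have hvy' : ¬ G.Adj v y' := by
            intro hadj
            obtain ⟨w, hw, hwlen⟩ := four_cycle_exists hvx1 hxz' hy'z'.symm hadj.symm
              (Ne.symm hz'v) hxy'.ne
            exact h4 v w hw hwlen
          have hNdiff : G.neighborFinset y' \ A = {x1, z'} := by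
            have hps : ({x1, z'} : Finset V) ⊆ G.neighborFinset y' \ A := by
              intro w hw
              simp only [Finset.mem_insert, Finset.mem_singleton] at hw
              rcases hw with rfl | rfl
              · exact Finset.mem_sdiff.mpr ⟨(hmN _ _).mpr hxy'.symm, hx1nA⟩
              · exact Finset.mem_sdiff.mpr ⟨(hmN _ _).mpr hy'z', hz'nA⟩
            have htot := Finset.card_sdiff_add_card_inter (G.neighborFinset y') A
            have hd5 : (G.neighborFinset y').card ≤ 5 := by
              rw [G.card_neighborFinset_eq_degree]; exact hdy'
            refine (Finset.eq_of_subset_of_card_le hps ?_).symm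
            rw [Finset.card_pair hx1z']
            omega
          have hsetC' : S \ insert x1 (A.erase y') = insert y' ((S \ A).erase x1) := by
            ext x
            by_cases hxx1 : x = x1
            · subst hxx1; simp [hx1y']
            · by_cases hxy2 : x = y'
              · subst hxy2; simp [hy'S, Ne.symm hx1y']
              · simp only [Finset.mem_sdiff, Finset.mem_insert, Finset.mem_erase, hxx1, hxy2,
                  false_or, not_or]
                tauto
          have hpart : FFPartOn G S (insert x1 (A.erase y')) := by
            refine ⟨?_, ?_, ?_, ?_, ?_⟩
            · intro x hx
              rcases Finset.mem_insert.mp hx with rfl | hxA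
              · exact hx1S
              · exact hAS (Finset.erase_subset _ _ hxA)
            · intro u hu
              rcases Finset.mem_insert.mp hu with hux | huA'
              · rw [hux]
                have hsub : G.neighborFinset x1 ∩ insert x1 (A.erase y') ⊆ (∅ : Finset V) := by
                  intro w hw
                  obtain ⟨hwN, hwI⟩ := Finset.mem_inter.mp hw
                  rw [hNx1'] at hwN
                  simp only [Finset.mem_insert, Finset.mem_singleton] at hwN
                  rcases hwN with rfl | rfl | rfl
                  · rcases Finset.mem_insert.mp hwI with h' | h'
                    · exact absurd h' hvx1.ne
                    · exact absurd (Finset.mem_erase.mp h').2 hvA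
                  · rcases Finset.mem_insert.mp hwI with h' | h'
                    · exact absurd h' (Ne.symm hx1y')
                    · exact absurd rfl (Finset.mem_erase.mp h').1
                  · rcases Finset.mem_insert.mp hwI with h' | h'
                    · exact absurd h' (Ne.symm hx1z')
                    · exact absurd (Finset.mem_erase.mp h').2 hz'nA
                exact le_trans (Finset.card_le_card hsub) (by simp)
              · obtain ⟨huy', huA⟩ := Finset.mem_erase.mp huA'
                have hx1N : x1 ∉ G.neighborFinset u := by
                  intro hmem
                  have huN : u ∈ G.neighborFinset x1 :=
                    (hmN _ _).mpr ((hmN _ _).mp hmem).symm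
                  rw [hNx1'] at huN
                  simp only [Finset.mem_insert, Finset.mem_singleton] at huN
                  rcases huN with rfl | rfl | rfl
                  · exact hvA huA
                  · exact huy' rfl
                  · exact hz'nA huA
                have hsub : G.neighborFinset u ∩ insert x1 (A.erase y') ⊆
                    G.neighborFinset u ∩ A := by
                  intro w hw
                  obtain ⟨hwN, hwI⟩ := Finset.mem_inter.mp hw
                  rcases Finset.mem_insert.mp hwI with rfl | hwA
                  · exact absurd hwN hx1N
                  · exact Finset.mem_inter.mpr ⟨hwN, (Finset.mem_erase.mp hwA).2⟩
                exact le_trans (Finset.card_le_card hsub) (hA3 u huA)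
            · intro u hu
              rw [hsetC'] at hu ⊢
              rcases Finset.mem_insert.mp hu with huy | huC'
              · rw [huy]
                have hsub : G.neighborFinset y' ∩ insert y' ((S \ A).erase x1) ⊆ {z'} := by
                  intro w hw
                  obtain ⟨hwN, hwI⟩ := Finset.mem_inter.mp hw
                  have hwu : w ≠ y' := ((hmN _ _).mp hwN).ne'
                  have hwI' : w ∈ (S \ A).erase x1 := by
                    rcases Finset.mem_insert.mp hwI with h' | h'
                    · exact absurd h' hwu
                    · exact h'
                  obtain ⟨hwx1, hwC⟩ := Finset.mem_erase.mp hwI'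
                  have hwd : w ∈ G.neighborFinset y' \ A :=
                    Finset.mem_sdiff.mpr ⟨hwN, (Finset.mem_sdiff.mp hwC).2⟩
                  rw [hNdiff] at hwd
                  simp only [Finset.mem_insert, Finset.mem_singleton] at hwd
                  rcases hwd with rfl | rfl
                  · exact absurd rfl hwx1
                  · exact Finset.mem_singleton_self _
                exact le_trans (Finset.card_le_card hsub) (by simp)
              · obtain ⟨hux1, huC⟩ := Finset.mem_erase.mp huC'
                by_cases huz : u = z'
                · rw [huz] at hux1 huC ⊢
                  have hx1mem : x1 ∈ G.neighborFinset z' ∩ (S \ A) :=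
                    Finset.mem_inter.mpr ⟨(hmN _ _).mpr hxz'.symm, hx1C⟩
                  have hsub : G.neighborFinset z' ∩ insert y' ((S \ A).erase x1) ⊆
                      insert y' ((G.neighborFinset z' ∩ (S \ A)).erase x1) := by
                    intro w hw
                    obtain ⟨hwN, hwI⟩ := Finset.mem_inter.mp hw
                    rcases Finset.mem_insert.mp hwI with rfl | hwC
                    · exact Finset.mem_insert_self _ _
                    · obtain ⟨hwx1, hwC'⟩ := Finset.mem_erase.mp hwC
                      exact Finset.mem_insert_of_mem (Finset.mem_erase.mpr
                        ⟨hwx1, Finset.mem_inter.mpr ⟨hwN, hwC'⟩⟩)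
                  have hc1 := Finset.card_le_card hsub
                  have hc2 := Finset.card_insert_le y'
                    ((G.neighborFinset z' ∩ (S \ A)).erase x1)
                  have hc3 := Finset.card_erase_of_mem hx1mem
                  have hc4'' := hC4 z' huC
                  have hpos : 0 < (G.neighborFinset z' ∩ (S \ A)).card :=
                    Finset.card_pos.mpr ⟨x1, hx1mem⟩
                  omega
                · have hy'N : y' ∉ G.neighborFinset u := by
                    intro hmem
                    have huN : u ∈ G.neighborFinset y' \ A := by
                      refine Finset.mem_sdiff.mpr
                        ⟨(hmN _ _).mpr ((hmN _ _).mp hmem).symm, ?_⟩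
                      exact (Finset.mem_sdiff.mp huC).2
                    rw [hNdiff] at huN
                    simp only [Finset.mem_insert, Finset.mem_singleton] at huN
                    rcases huN with rfl | rfl
                    · exact hux1 rfl
                    · exact huz rfl
                  have hsub : G.neighborFinset u ∩ insert y' ((S \ A).erase x1) ⊆
                      G.neighborFinset u ∩ (S \ A) := by
                    intro w hw
                    obtain ⟨hwN, hwI⟩ := Finset.mem_inter.mp hw
                    rcases Finset.mem_insert.mp hwI with rfl | hwC
                    · exact absurd hwN hy'N
                    · exact Finset.mem_inter.mpr ⟨hwN, (Finset.mem_erase.mp hwC).2⟩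
                  exact le_trans (Finset.card_le_card hsub) (hC4 u huC)
            · refine insert_acyclic (fun h => hx1nA (Finset.erase_subset _ _ h))
                (acyclic_mono (Finset.erase_subset _ _) hAac) ?_
              have hsub : G.neighborFinset x1 ∩ A.erase y' ⊆ (∅ : Finset V) := by
                intro w hw
                obtain ⟨hwN, hwI⟩ := Finset.mem_inter.mp hw
                obtain ⟨hwy', hwA⟩ := Finset.mem_erase.mp hwI
                rw [hNx1'] at hwN
                simp only [Finset.mem_insert, Finset.mem_singleton] at hwN
                rcases hwN with rfl | rfl | rfl
                · exact absurd hwA hvA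
                · exact absurd rfl hwy'
                · exact absurd hwA hz'nA
              exact le_trans (Finset.card_le_card hsub) (by simp)
            · rw [hsetC']
              refine insert_acyclic ?_ (acyclic_mono (Finset.erase_subset _ _) hCac) ?_
              · intro h
                exact (Finset.mem_sdiff.mp (Finset.erase_subset _ _ h)).2 hy'A
              · have hsub : G.neighborFinset y' ∩ (S \ A).erase x1 ⊆ {z'} := by
                  intro w hw
                  obtain ⟨hwN, hwI⟩ := Finset.mem_inter.mp hw
                  obtain ⟨hwx1, hwC⟩ := Finset.mem_erase.mp hwI
                  have hwd : w ∈ G.neighborFinset y' \ A :=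
                    Finset.mem_sdiff.mpr ⟨hwN, (Finset.mem_sdiff.mp hwC).2⟩
                  rw [hNdiff] at hwd
                  simp only [Finset.mem_insert, Finset.mem_singleton] at hwd
                  rcases hwd with rfl | rfl
                  · exact absurd rfl hwx1
                  · exact Finset.mem_singleton_self _
                exact le_trans (Finset.card_le_card hsub) (by simp)
          refine haddC (insert x1 (A.erase y')) hpart ?_
          have hsub : G.neighborFinset v ∩ (S \ insert x1 (A.erase y')) ⊆ {x2} := by
            rw [hsetC']
            intro w hw
            obtain ⟨hwN, hwI⟩ := Finset.mem_inter.mp hw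
            rcases Finset.mem_insert.mp hwI with rfl | hwC
            · exact absurd ((hmN _ _).mp hwN) hvy'
            · obtain ⟨hwx1, hwC'⟩ := Finset.mem_erase.mp hwC
              have hw2 : w ∈ G.neighborFinset v ∩ (S \ A) :=
                Finset.mem_inter.mpr ⟨hwN, hwC'⟩
              rw [hNCeq] at hw2
              simp only [Finset.mem_insert, Finset.mem_singleton] at hw2
              rcases hw2 with rfl | rfl
              · exact absurd rfl hwx1
              · exact Finset.mem_singleton_self _
          exact le_trans (Finset.card_le_card hsub) (by simp)
      by_cases hyC : y ∈ S \ A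
      · by_cases hzC : z ∈ S \ A
        · exact hnotboth ⟨hyC, hzC⟩
        · exact core z y hzv hyv hxz hxy hyz.symm hdz
            (by rw [hNx1, Finset.pair_comm y z]) hyC hzC
      · rcases hyzC with hyC' | hzC
        · exact absurd hyC' hyC
        · exact core y z hyv hzv hxy hxz hyz hdy hNx1 hzC hyC
    by_cases hx1B : x1 ∈ B
    · exact inner3 x1 x2 hvx1 hvx2 hx12 hNCeq hx1B hr1
    by_cases hx2B : x2 ∈ B
    · exact inner3 x2 x1 hvx2 hvx1 hx12.symm (by rw [hNCeq, Finset.pair_comm]) hx2B hr2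
    · exact hBor x1 x2 hvx1 hvx2 hx12 hx1B hx2B
end
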